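/- arXiv:2211.14532 — 7 statements merged into one kernel-verified Lean document; each statement's English description precedes it below -/
import Mathlib

section
/- If g is analytic and univalent on the unit disk with g(0)=0, g'(0)=1, and Re(z g'(z)/g(z)) > 0 for all z in the unit disk (i.e., g is starlike), and g(z) = z + b₂z² + b₃z³ + ..., then |b₃² − b₂²| ≤ 13. -/
open Complex Metric Set

private lemma eqOn_deriv' {S : Set ℂ} (hS : IsOpen S) {f h : ℂ → ℂ} (e : Set.EqOn f h S) :
    Set.EqOn (deriv f) (deriv h) S := fun z hz =>
  Filter.EventuallyEq.deriv_eq (Filter.eventuallyEq_of_mem (hS.mem_nhds hz) e)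

set_option maxHeartbeats 1000000 in
theorem toeplitz_T22_starlike (g : ℂ → ℂ)
    (hg : DifferentiableOn ℂ g (ball (0:ℂ) 1))
    (hinj : Set.InjOn g (ball (0:ℂ) 1))
    (h0 : g 0 = 0) (h1 : deriv g 0 = 1)
    (hst : ∀ z ∈ ball (0:ℂ) 1, z ≠ 0 → 0 < (z * deriv g z / g z).re) :
    ‖(iteratedDeriv 3 g 0 / 6) ^ 2 - (iteratedDeriv 2 g 0 / 2) ^ 2‖ ≤ 13 := by
  set S : Set ℂ := ball (0:ℂ) 1 with hS_def
  have hS : IsOpen S := isOpen_ball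
  have h0S : (0:ℂ) ∈ S := mem_ball_self one_pos
  have hga : AnalyticOnNhd ℂ g S := hg.analyticOnNhd hS
  have hg1 : AnalyticOnNhd ℂ (deriv g) S := hga.deriv
  have hg2 : AnalyticOnNhd ℂ (deriv (deriv g)) S := hg1.deriv
  have hg3 : AnalyticOnNhd ℂ (deriv (deriv (deriv g))) S := hg2.deriv
  -- u := g z / z, analytic, nonzero
  set u : ℂ → ℂ := dslope g 0 with hu_def
  have hud : DifferentiableOn ℂ u S := (differentiableOn_dslope (hS.mem_nhds h0S)).mpr hg
  have hua : AnalyticOnNhd ℂ u S := hud.analyticOnNhd hS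
  have hu0 : u 0 = 1 := by rw [hu_def, dslope_same, h1]
  have hgu : ∀ z, g z = z * u z := by
    intro z
    have := sub_smul_dslope g 0 z
    rw [sub_zero, smul_eq_mul, h0, sub_zero] at this
    exact this.symm
  have hune : ∀ z ∈ S, u z ≠ 0 := by
    intro z hz hu
    rcases eq_or_ne z 0 with rfl | hz0
    · rw [hu0] at hu; exact one_ne_zero hu
    · have : g z = g 0 := by rw [hgu z, hu, mul_zero, h0]
      exact hz0 (hinj hz h0S this)
  -- p := z g' / g = g' / u
  set p : ℂ → ℂ := fun z => deriv g z / u z with hp_def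
  have hpa : AnalyticOnNhd ℂ p S := fun z hz => (hg1 z hz).div (hua z hz) (hune z hz)
  have hp1a : AnalyticOnNhd ℂ (deriv p) S := hpa.deriv
  have hp2a : AnalyticOnNhd ℂ (deriv (deriv p)) S := hp1a.deriv
  have hp0 : p 0 = 1 := by rw [hp_def]; simp [h1, hu0]
  have hpg : Set.EqOn (fun z => z * deriv g z) (fun z => p z * g z) S := by
    intro z hz
    simp only [hp_def]
    rw [hgu z]
    field_simp [hune z hz]
  have hpre : ∀ z ∈ S, 0 < (p z).re := by
    intro z hz
    rcases eq_or_ne z 0 with rfl | hz0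
    · rw [hp0]; norm_num
    · have h := hst z hz hz0
      have : z * deriv g z / g z = p z := by
        rw [hp_def, hgu z]
        field_simp [hune z hz]
      rwa [this] at h
  -- w := (p-1)/(p+1)
  have hpd : ∀ z ∈ S, p z + 1 ≠ 0 := by
    intro z hz h
    have h2 := hpre z hz
    have : p z = -1 := by linear_combination h
    rw [this] at h2
    norm_num at h2
  set w : ℂ → ℂ := fun z => (p z - 1) / (p z + 1) with hw_def
  have hwa : AnalyticOnNhd ℂ w S := fun z hz =>
    ((hpa z hz).sub analyticAt_const).div ((hpa z hz).add analyticAt_const) (hpd z hz)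
  have hw0 : w 0 = 0 := by rw [hw_def]; simp [hp0]
  have hwball : MapsTo w S (ball (0:ℂ) 1) := by
    intro z hz
    rw [mem_ball_zero_iff]
    have hlt : Complex.normSq (p z - 1) < Complex.normSq (p z + 1) := by
      have := hpre z hz
      simp only [Complex.normSq_apply, Complex.sub_re, Complex.sub_im, Complex.add_re,
        Complex.add_im, Complex.one_re, Complex.one_im]
      nlinarith [this]
    have habs : ‖p z - 1‖ < ‖p z + 1‖ := by
      rw [Complex.norm_def, Complex.norm_def]
      exact Real.sqrt_lt_sqrt (Complex.normSq_nonneg _) hlt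
    rw [hw_def]
    simp only [norm_div]
    rw [div_lt_one (lt_of_le_of_lt (norm_nonneg _) habs)]
    exact habs
  -- q := w z / z, |q| ≤ 1 by Schwarz
  set q : ℂ → ℂ := dslope w 0 with hq_def
  have hqd : DifferentiableOn ℂ q S := (differentiableOn_dslope (hS.mem_nhds h0S)).mpr
    hwa.differentiableOn
  have hqa : AnalyticOnNhd ℂ q S := hqd.analyticOnNhd hS
  have hq1a : AnalyticOnNhd ℂ (deriv q) S := hqa.deriv
  have hwq : ∀ z, w z = z * q z := by
    intro z
    have := sub_smul_dslope w 0 z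
    rw [sub_zero, smul_eq_mul, hw0, sub_zero] at this
    exact this.symm
  have hqle : ∀ z ∈ S, ‖q z‖ ≤ 1 := by
    intro z hz
    have hmaps : MapsTo w S (ball (w 0) 1) := by rwa [hw0]
    have := Complex.norm_dslope_le_div_of_mapsTo_ball hwa.differentiableOn (hmaps.mono_right ball_subset_closedBall) hz
    simpa [hq_def] using this
  set c1 : ℂ := q 0 with hc1_def
  set c2 : ℂ := deriv q 0 with hc2_def
  set t : ℝ := ‖c1‖ with ht_def
  have ht1 : t ≤ 1 := hqle 0 h0S
  have ht0 : 0 ≤ t := norm_nonneg _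
  -- Schwarz–Pick : |c2| ≤ 1 - t^2
  have hSP : ‖c2‖ ≤ 1 - t ^ 2 := by
    by_cases hcon : ∃ z₀ ∈ S, ‖q z₀‖ = 1
    · obtain ⟨z₀, hz₀, hz₀eq⟩ := hcon
      have hmax : IsMaxOn (norm ∘ q) S z₀ := by
        intro z hz
        simp only [Function.comp_apply, hz₀eq]
        exact hqle z hz
      have heq := Complex.eqOn_of_isPreconnected_of_isMaxOn_norm
        (convex_ball (0:ℂ) 1).isPreconnected hS hqd hz₀ hmax
      have : deriv q 0 = 0 := by
        have hev : q =ᶠ[nhds 0] (fun _ => q z₀) :=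
          Filter.eventuallyEq_of_mem (hS.mem_nhds h0S) heq
        rw [hev.deriv_eq, deriv_const]
      rw [hc2_def, this]
      simp only [norm_zero]
      nlinarith
    · push_neg at hcon
      have hqlt : ∀ z ∈ S, ‖q z‖ < 1 := fun z hz =>
        lt_of_le_of_ne (hqle z hz) (hcon z hz)
      have htlt : t < 1 := hqlt 0 h0S
      have hden : ∀ z ∈ S, 1 - (starRingEnd ℂ) c1 * q z ≠ 0 := by
        intro z hz h
        have h2 : ‖(starRingEnd ℂ) c1 * q z‖ < 1 := by
          rw [norm_mul, Complex.norm_conj]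
          calc t * ‖q z‖ ≤ 1 * ‖q z‖ := by
                exact mul_le_mul_of_nonneg_right ht1 (norm_nonneg _)
            _ < 1 := by rw [one_mul]; exact hqlt z hz
        have : (starRingEnd ℂ) c1 * q z = 1 := by linear_combination -h
        rw [this] at h2
        simp at h2
      set B : ℂ → ℂ := fun z => (q z - c1) / (1 - (starRingEnd ℂ) c1 * q z) with hB_def
      have hBa : AnalyticOnNhd ℂ B S := fun z hz =>
        ((hqa z hz).sub analyticAt_const).div
          (analyticAt_const.sub (analyticAt_const.mul (hqa z hz))) (hden z hz)
      have hB0 : B 0 = 0 := by rw [hB_def]; simp [hc1_def]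
      have hBmaps : MapsTo B S (ball (B 0) 1) := by
        rw [hB0]
        intro z hz
        rw [mem_ball_zero_iff]
        have hq2 : Complex.normSq (q z) < 1 := by
          rw [← Complex.sq_norm]
          nlinarith [hqlt z hz, norm_nonneg (q z)]
        have hc2' : Complex.normSq c1 < 1 := by
          rw [← Complex.sq_norm]
          nlinarith
        have hlt : Complex.normSq (q z - c1) < Complex.normSq (1 - (starRingEnd ℂ) c1 * q z) := by
          simp only [Complex.normSq_apply, Complex.sub_re, Complex.sub_im, Complex.mul_re,
            Complex.mul_im, Complex.conj_re, Complex.conj_im, Complex.one_re, Complex.one_im]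
          simp only [Complex.normSq_apply] at hq2 hc2'
          nlinarith [hq2, hc2']
        have habs : ‖q z - c1‖ < ‖1 - (starRingEnd ℂ) c1 * q z‖ := by
          rw [Complex.norm_def, Complex.norm_def]
          exact Real.sqrt_lt_sqrt (Complex.normSq_nonneg _) hlt
        rw [hB_def]
        simp only [norm_div]
        rw [div_lt_one (lt_of_le_of_lt (norm_nonneg _) habs)]
        exact habs
      have hBder : ‖deriv B 0‖ ≤ 1 / 1 :=
        Complex.norm_deriv_le_div_of_mapsTo_ball hBa.differentiableOn (hBmaps.mono_right ball_subset_closedBall) one_pos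
      have hconj : (starRingEnd ℂ) c1 * c1 = ((t ^ 2 : ℝ) : ℂ) := by
        rw [mul_comm, Complex.mul_conj, ht_def, Complex.sq_norm]
      have hdB : deriv B 0 = c2 / (1 - (t ^ 2 : ℝ)) := by
        rw [hB_def]
        rw [deriv_fun_div ((hqa 0 h0S).differentiableAt.sub_const c1)
          ((differentiableAt_const (1:ℂ)).fun_sub
            ((differentiableAt_const _).fun_mul (hqa 0 h0S).differentiableAt)) (hden 0 h0S)]
        rw [deriv_sub_const, deriv_const_sub, deriv_const_mul _ (hqa 0 h0S).differentiableAt]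
        simp only [← hc1_def, ← hc2_def, sub_self, zero_mul, hconj]
        push_cast
        have hne : (1:ℂ) - (t:ℂ) ^ 2 ≠ 0 := by
          have := hden 0 h0S
          rw [hconj] at this
          push_cast at this
          exact this
        field_simp
        ring
      have habsne : (0:ℝ) < 1 - t ^ 2 := by nlinarith
      rw [hdB] at hBder
      rw [norm_div] at hBder
      have : ‖(1:ℂ) - ((t ^ 2 : ℝ) : ℂ)‖ = 1 - t ^ 2 := by
        rw [show (1:ℂ) - ((t ^ 2 : ℝ) : ℂ) = (((1 - t ^ 2 : ℝ)) : ℂ) by push_cast; ring]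
        rw [Complex.norm_real, Real.norm_eq_abs, abs_of_pos habsne]
      rw [this, div_le_div_iff₀ habsne one_pos] at hBder
      linarith [hBder]
  -- derivative bookkeeping
  have hwfun : w = fun z => z * q z := funext hwq
  have hw' : Set.EqOn (deriv w) (fun z => q z + z * deriv q z) S := by
    intro z hz
    rw [hwfun, deriv_fun_mul differentiableAt_fun_id (hqa z hz).differentiableAt]
    simp
  have hw'0 : deriv w 0 = c1 := by
    have := hw' h0S
    simpa using this
  have hw''0 : deriv (deriv w) 0 = 2 * c2 := by
    have h2 := eqOn_deriv' hS hw' h0S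
    rw [h2]
    rw [deriv_fun_add (hqa 0 h0S).differentiableAt
      (differentiableAt_fun_id.fun_mul (hq1a 0 h0S).differentiableAt)]
    rw [deriv_fun_mul differentiableAt_fun_id (hq1a 0 h0S).differentiableAt]
    simp [hc2_def]
    ring
  set P1 : ℂ := deriv p 0 with hP1_def
  set P2 : ℂ := deriv (deriv p) 0 with hP2_def
  set G2 : ℂ := deriv (deriv g) 0 with hG2_def
  set G3 : ℂ := deriv (deriv (deriv g)) 0 with hG3_def
  -- identity p*(1-w) = 1+w on S
  have hpw : Set.EqOn (fun z => p z * (1 - w z)) (fun z => 1 + w z) S := by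
    intro z hz
    simp only [hw_def]
    field_simp [hpd z hz]
    ring
  have hC1 : Set.EqOn (fun z => deriv p z * (1 - w z) - p z * deriv w z)
      (fun z => deriv w z) S := by
    intro z hz
    have hL := deriv_fun_mul (hpa z hz).differentiableAt
      ((differentiableAt_const (1:ℂ)).fun_sub (hwa z hz).differentiableAt)
    have hLR := eqOn_deriv' hS hpw hz
    rw [hL] at hLR
    rw [deriv_const_sub, deriv_const_add] at hLR
    simp only
    linear_combination hLR
  have hP1c : P1 = 2 * c1 := by
    have := hC1 h0S
    simp only [hw0, hw'0, ← hP1_def, hp0] at this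
    rw [hP1_def]
    linear_combination this
  have hP2c : P2 = 4 * c1 ^ 2 + 4 * c2 := by
    have h2 := eqOn_deriv' hS hC1 h0S
    have hd1 : DifferentiableAt ℂ (fun z => deriv p z * (1 - w z)) 0 :=
      (hp1a 0 h0S).differentiableAt.fun_mul
        ((differentiableAt_const (1:ℂ)).fun_sub (hwa 0 h0S).differentiableAt)
    have hd2 : DifferentiableAt ℂ (fun z => p z * deriv w z) 0 :=
      (hpa 0 h0S).differentiableAt.fun_mul (hwa.deriv 0 h0S).differentiableAt
    rw [deriv_fun_sub hd1 hd2] at h2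
    rw [deriv_fun_mul (hp1a 0 h0S).differentiableAt
      ((differentiableAt_const (1:ℂ)).fun_sub (hwa 0 h0S).differentiableAt)] at h2
    rw [deriv_fun_mul (hpa 0 h0S).differentiableAt (hwa.deriv 0 h0S).differentiableAt] at h2
    rw [deriv_const_sub] at h2
    simp only [hw0, hw'0, hw''0, hp0, ← hP1_def, ← hP2_def] at h2
    rw [hP1c] at h2
    linear_combination h2
  -- identity z g' = p g on S
  have hL1 : Set.EqOn (deriv (fun z => z * deriv g z))
      (fun z => deriv g z + z * deriv (deriv g) z) S := by
    intro z hz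
    rw [deriv_fun_mul differentiableAt_fun_id (hg1 z hz).differentiableAt]
    simp
  have hR1 : Set.EqOn (deriv (fun z => p z * g z))
      (fun z => deriv p z * g z + p z * deriv g z) S := by
    intro z hz
    rw [deriv_fun_mul (hpa z hz).differentiableAt (hga z hz).differentiableAt]
  have hLR1 : Set.EqOn (fun z => deriv g z + z * deriv (deriv g) z)
      (fun z => deriv p z * g z + p z * deriv g z) S :=
    hL1.symm.trans ((eqOn_deriv' hS hpg).trans hR1)
  have hG2c : G2 = 2 * P1 := by
    have h2 := eqOn_deriv' hS hLR1 h0S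
    rw [deriv_fun_add (hg1 0 h0S).differentiableAt
      (differentiableAt_fun_id.fun_mul (hg2 0 h0S).differentiableAt)] at h2
    rw [deriv_fun_mul differentiableAt_fun_id (hg2 0 h0S).differentiableAt] at h2
    rw [deriv_fun_add ((hp1a 0 h0S).differentiableAt.fun_mul (hga 0 h0S).differentiableAt)
      ((hpa 0 h0S).differentiableAt.fun_mul (hg1 0 h0S).differentiableAt)] at h2
    rw [deriv_fun_mul (hp1a 0 h0S).differentiableAt (hga 0 h0S).differentiableAt] at h2
    rw [deriv_fun_mul (hpa 0 h0S).differentiableAt (hg1 0 h0S).differentiableAt] at h2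
    simp only [h0, h1, hp0, deriv_id'', ← hP1_def, ← hG2_def, mul_zero, zero_mul, mul_one,
      one_mul, zero_add, add_zero] at h2
    linear_combination h2
  have hL2 : Set.EqOn (deriv (fun z => deriv g z + z * deriv (deriv g) z))
      (fun z => 2 * deriv (deriv g) z + z * deriv (deriv (deriv g)) z) S := by
    intro z hz
    rw [deriv_fun_add (hg1 z hz).differentiableAt
      (differentiableAt_fun_id.fun_mul (hg2 z hz).differentiableAt)]
    rw [deriv_fun_mul differentiableAt_fun_id (hg2 z hz).differentiableAt]
    simp only [deriv_id'', one_mul]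
    ring
  have hR2 : Set.EqOn (deriv (fun z => deriv p z * g z + p z * deriv g z))
      (fun z => (deriv (deriv p) z * g z + deriv p z * deriv g z)
        + (deriv p z * deriv g z + p z * deriv (deriv g) z)) S := by
    intro z hz
    rw [deriv_fun_add ((hp1a z hz).differentiableAt.fun_mul (hga z hz).differentiableAt)
      ((hpa z hz).differentiableAt.fun_mul (hg1 z hz).differentiableAt)]
    rw [deriv_fun_mul (hp1a z hz).differentiableAt (hga z hz).differentiableAt]
    rw [deriv_fun_mul (hpa z hz).differentiableAt (hg1 z hz).differentiableAt]
  have hLR2 : Set.EqOn (fun z => 2 * deriv (deriv g) z + z * deriv (deriv (deriv g)) z)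
      (fun z => (deriv (deriv p) z * g z + deriv p z * deriv g z)
        + (deriv p z * deriv g z + p z * deriv (deriv g) z)) S :=
    hL2.symm.trans ((eqOn_deriv' hS hLR1).trans hR2)
  have hG3c : G3 = 18 * c1 ^ 2 + 6 * c2 := by
    have h3 := eqOn_deriv' hS hLR2 h0S
    -- LHS
    rw [deriv_fun_add ((differentiableAt_const (2:ℂ)).fun_mul (hg2 0 h0S).differentiableAt)
      (differentiableAt_fun_id.fun_mul (hg3 0 h0S).differentiableAt)] at h3
    rw [deriv_const_mul _ (hg2 0 h0S).differentiableAt] at h3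
    rw [deriv_fun_mul differentiableAt_fun_id (hg3 0 h0S).differentiableAt] at h3
    -- RHS
    rw [deriv_fun_add
      ((hp2a 0 h0S).differentiableAt.fun_mul (hga 0 h0S).differentiableAt |>.fun_add
        ((hp1a 0 h0S).differentiableAt.fun_mul (hg1 0 h0S).differentiableAt))
      ((hp1a 0 h0S).differentiableAt.fun_mul (hg1 0 h0S).differentiableAt |>.fun_add
        ((hpa 0 h0S).differentiableAt.fun_mul (hg2 0 h0S).differentiableAt))] at h3
    rw [deriv_fun_add ((hp2a 0 h0S).differentiableAt.fun_mul (hga 0 h0S).differentiableAt)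
      ((hp1a 0 h0S).differentiableAt.fun_mul (hg1 0 h0S).differentiableAt)] at h3
    rw [deriv_fun_add ((hp1a 0 h0S).differentiableAt.fun_mul (hg1 0 h0S).differentiableAt)
      ((hpa 0 h0S).differentiableAt.fun_mul (hg2 0 h0S).differentiableAt)] at h3
    rw [deriv_fun_mul (hp2a 0 h0S).differentiableAt (hga 0 h0S).differentiableAt] at h3
    rw [deriv_fun_mul (hp1a 0 h0S).differentiableAt (hg1 0 h0S).differentiableAt] at h3
    rw [deriv_fun_mul (hpa 0 h0S).differentiableAt (hg2 0 h0S).differentiableAt] at h3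
    simp only [h0, h1, hp0, deriv_id'', mul_zero, zero_mul, mul_one, one_mul, zero_add,
      add_zero, ← hP1_def, ← hP2_def, ← hG2_def, ← hG3_def] at h3
    rw [hP1c, hP2c, hG2c, hP1c] at h3
    linear_combination h3 / 2
  -- final assembly
  have hit2 : iteratedDeriv 2 g 0 = G2 := by
    have h2 : (2:ℕ) = 1 + 1 := rfl
    rw [h2, iteratedDeriv_succ, iteratedDeriv_one, hG2_def]
  have hit3 : iteratedDeriv 3 g 0 = G3 := by
    have h3 : (3:ℕ) = 2 + 1 := rfl
    have h2 : (2:ℕ) = 1 + 1 := rfl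
    rw [h3, iteratedDeriv_succ, h2, iteratedDeriv_succ, iteratedDeriv_one, hG3_def]
  have hB3 : iteratedDeriv 3 g 0 / 6 = 3 * c1 ^ 2 + c2 := by
    rw [hit3, hG3c]; ring
  have hB2 : iteratedDeriv 2 g 0 / 2 = 2 * c1 := by
    rw [hit2, hG2c, hP1c]; ring
  rw [hB3, hB2]
  set s : ℝ := ‖c2‖ with hs_def
  have hs0 : 0 ≤ s := norm_nonneg _
  have hb3 : ‖3 * c1 ^ 2 + c2‖ ≤ 3 * t ^ 2 + s := by
    calc ‖3 * c1 ^ 2 + c2‖ ≤ ‖3 * c1 ^ 2‖ + ‖c2‖ :=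
          norm_add_le _ _
      _ = 3 * t ^ 2 + s := by
          rw [norm_mul, norm_pow]
          norm_num [ht_def, hs_def]
  have h2c1 : ‖2 * c1‖ = 2 * t := by
    rw [norm_mul]
    norm_num [ht_def]
  calc ‖(3 * c1 ^ 2 + c2) ^ 2 - (2 * c1) ^ 2‖
      ≤ ‖(3 * c1 ^ 2 + c2) ^ 2‖ + ‖(2 * c1) ^ 2‖ := by
        rw [sub_eq_add_neg]
        refine (norm_add_le _ _).trans_eq ?_
        rw [norm_neg]
    _ = ‖3 * c1 ^ 2 + c2‖ ^ 2 + ‖2 * c1‖ ^ 2 := by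
        rw [norm_pow, norm_pow]
    _ ≤ (3 * t ^ 2 + s) ^ 2 + (2 * t) ^ 2 := by
        rw [h2c1]
        have : 0 ≤ ‖3 * c1 ^ 2 + c2‖ := norm_nonneg _
        nlinarith [hb3, this]
    _ ≤ 13 := by nlinarith [hSP, ht1, ht0, hs0]
end

section
/- If g is analytic and univalent on the unit disk with g(0)=0, g'(0)=1, and Re(z g'(z)/g(z)) > 0 for all z in the unit disk, and g(z) = z + b₂z² + b₃z³ + ..., then |2b₂²b₃ − b₃² − 2b₂² + 1| ≤ 24. -/
open Complex Metric Set Filter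

private lemma analyticAt_deriv' {f : ℂ → ℂ} {x : ℂ} (h : AnalyticAt ℂ f x) :
    AnalyticAt ℂ (deriv f) x := by
  obtain ⟨s, hs, hf⟩ := h.exists_mem_nhds_analyticOnNhd
  exact hf.deriv x (mem_of_mem_nhds hs)

private lemma deriv_helper {f u v : ℂ → ℂ}
    (hu : AnalyticAt ℂ u 0) (hv : AnalyticAt ℂ v 0)
    (hf : f =ᶠ[nhds (0:ℂ)] fun z => u z * v z) :
    deriv f 0 = deriv u 0 * v 0 + u 0 * deriv v 0 ∧
    deriv (deriv f) 0 = deriv (deriv u) 0 * v 0 + 2 * (deriv u 0 * deriv v 0)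
      + u 0 * deriv (deriv v) 0 ∧
    deriv (deriv (deriv f)) 0 = deriv (deriv (deriv u)) 0 * v 0
      + 3 * (deriv (deriv u) 0 * deriv v 0) + 3 * (deriv u 0 * deriv (deriv v) 0)
      + u 0 * deriv (deriv (deriv v)) 0 := by
  have e1 : deriv f =ᶠ[nhds (0:ℂ)] fun z => deriv u z * v z + u z * deriv v z := by
    refine hf.deriv.trans ?_
    filter_upwards [hu.eventually_analyticAt, hv.eventually_analyticAt] with z hz hz'
    exact deriv_mul hz.differentiableAt hz'.differentiableAt
  have e2 : deriv (deriv f) =ᶠ[nhds (0:ℂ)]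
      fun z => deriv (deriv u) z * v z + 2 * (deriv u z * deriv v z)
        + u z * deriv (deriv v) z := by
    refine e1.deriv.trans ?_
    filter_upwards [hu.eventually_analyticAt, hv.eventually_analyticAt] with z hz hz'
    have h1 : DifferentiableAt ℂ (fun w => deriv u w * v w) z :=
      ((analyticAt_deriv' hz).mul hz').differentiableAt
    have h2 : DifferentiableAt ℂ (fun w => u w * deriv v w) z :=
      (hz.mul (analyticAt_deriv' hz')).differentiableAt
    rw [deriv_fun_add h1 h2, deriv_fun_mul (analyticAt_deriv' hz).differentiableAt hz'.differentiableAt,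
      deriv_fun_mul hz.differentiableAt (analyticAt_deriv' hz').differentiableAt]
    ring
  refine ⟨?_, ?_, ?_⟩
  · rw [hf.deriv_eq, deriv_fun_mul hu.differentiableAt hv.differentiableAt]
  · rw [e1.deriv_eq,
      deriv_fun_add (f := fun z => deriv u z * v z) (g := fun z => u z * deriv v z)
        (((analyticAt_deriv' hu).mul hv).differentiableAt)
        ((hu.mul (analyticAt_deriv' hv)).differentiableAt),
      deriv_fun_mul (analyticAt_deriv' hu).differentiableAt hv.differentiableAt,
      deriv_fun_mul hu.differentiableAt (analyticAt_deriv' hv).differentiableAt]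
    ring
  · have hu1 := analyticAt_deriv' hu
    have hu2 := analyticAt_deriv' hu1
    have hv1 := analyticAt_deriv' hv
    have hv2 := analyticAt_deriv' hv1
    have D1 : deriv (fun z => deriv (deriv u) z * v z) 0
        = deriv (deriv (deriv u)) 0 * v 0 + deriv (deriv u) 0 * deriv v 0 :=
      deriv_mul hu2.differentiableAt hv.differentiableAt
    have D2 : deriv (fun z => 2 * (deriv u z * deriv v z)) 0
        = 2 * (deriv (deriv u) 0 * deriv v 0 + deriv u 0 * deriv (deriv v) 0) := by
      rw [deriv_const_mul (d := fun z => deriv u z * deriv v z) _ ((hu1.mul hv1).differentiableAt),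
        deriv_fun_mul hu1.differentiableAt hv1.differentiableAt]
    have D3 : deriv (fun z => u z * deriv (deriv v) z) 0
        = deriv u 0 * deriv (deriv v) 0 + u 0 * deriv (deriv (deriv v)) 0 :=
      deriv_mul hu.differentiableAt hv2.differentiableAt
    have h1 : DifferentiableAt ℂ (fun z => deriv (deriv u) z * v z) 0 :=
      (hu2.mul hv).differentiableAt
    have h2 : DifferentiableAt ℂ (fun z => 2 * (deriv u z * deriv v z)) 0 :=
      ((analyticAt_const (v := (2:ℂ))).mul (hu1.mul hv1)).differentiableAt
    have h3 : DifferentiableAt ℂ (fun z => u z * deriv (deriv v) z) 0 :=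
      (hu.mul hv2).differentiableAt
    have S : deriv (fun z => deriv (deriv u) z * v z + 2 * (deriv u z * deriv v z)
        + u z * deriv (deriv v) z) 0
        = deriv (fun z => deriv (deriv u) z * v z) 0
          + deriv (fun z => 2 * (deriv u z * deriv v z)) 0
          + deriv (fun z => u z * deriv (deriv v) z) 0 := by
      rw [deriv_fun_add (f := fun z => deriv (deriv u) z * v z + 2 * (deriv u z * deriv v z))
        (h1.add h2) h3, deriv_fun_add h1 h2]
    rw [e2.deriv_eq, S, D1, D2, D3]
    ring

private lemma moebius_lt {a b : ℂ} (ha : ‖a‖ < 1) (hb : ‖b‖ < 1) :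
    ‖b - a‖ < ‖1 - (starRingEnd ℂ) a * b‖ := by
  have hna : Complex.normSq a < 1 := by
    rw [← Complex.sq_norm]; nlinarith [norm_nonneg a]
  have hnb : Complex.normSq b < 1 := by
    rw [← Complex.sq_norm]; nlinarith [norm_nonneg b]
  have key : Complex.normSq (b - a) < Complex.normSq (1 - (starRingEnd ℂ) a * b) := by
    simp only [Complex.normSq_apply, Complex.sub_re, Complex.sub_im, Complex.mul_re,
      Complex.mul_im, Complex.one_re, Complex.one_im, Complex.conj_re, Complex.conj_im] at *
    nlinarith [sq_nonneg (a.re - b.re), sq_nonneg (a.im - b.im)]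
  rw [Complex.norm_def, Complex.norm_def]
  exact Real.sqrt_lt_sqrt (Complex.normSq_nonneg _) key
theorem toeplitz_T31_starlike (g : ℂ → ℂ)
    (hg : DifferentiableOn ℂ g (ball (0:ℂ) 1))
    (hinj : Set.InjOn g (ball (0:ℂ) 1))
    (h0 : g 0 = 0) (h1 : deriv g 0 = 1)
    (hst : ∀ z ∈ ball (0:ℂ) 1, z ≠ 0 → 0 < (z * deriv g z / g z).re) :
    ‖2 * (iteratedDeriv 2 g 0 / 2) ^ 2 * (iteratedDeriv 3 g 0 / 6)
      - (iteratedDeriv 3 g 0 / 6) ^ 2 - 2 * (iteratedDeriv 2 g 0 / 2) ^ 2 + 1‖ ≤ 24 := by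
  have hBo : IsOpen (ball (0:ℂ) 1) := isOpen_ball
  have mem0 : (0:ℂ) ∈ ball (0:ℂ) 1 := mem_ball_self one_pos
  have gA : AnalyticOnNhd ℂ g (ball 0 1) := hg.analyticOnNhd hBo
  have g'A : AnalyticOnNhd ℂ (deriv g) (ball 0 1) := gA.deriv
  have gne : ∀ z ∈ ball (0:ℂ) 1, z ≠ 0 → g z ≠ 0 := by
    intro z hz hz0 hgz
    exact hz0 (hinj hz mem0 (by rw [hgz, h0]))
  set h : ℂ → ℂ := dslope g 0 with hh
  have h0' : h 0 = 1 := by rw [hh, dslope_same, h1]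
  have hzeq : ∀ z : ℂ, z ≠ 0 → h z = g z / z := by
    intro z hz0
    rw [hh, dslope_of_ne _ hz0, slope_def_field, h0]
    simp
  have geq : ∀ z : ℂ, g z = z * h z := by
    intro z
    rcases eq_or_ne z 0 with rfl | hz0
    · simp [h0]
    · rw [hzeq z hz0]; field_simp
  have hA0 : AnalyticAt ℂ h 0 := by
    obtain ⟨ps, hps⟩ := gA 0 mem0
    exact ⟨_, hps.has_fpower_series_dslope_fslope⟩
  have hdOn : DifferentiableOn ℂ h (ball 0 1) := by
    intro z hz
    rcases eq_or_ne z 0 with rfl | hz0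
    · exact hA0.differentiableAt.differentiableWithinAt
    · have hd : DifferentiableAt ℂ (fun w => g w / w) z :=
        (hg.differentiableAt (hBo.mem_nhds hz)).div differentiableAt_id hz0
      refine (hd.congr_of_eventuallyEq ?_).differentiableWithinAt
      filter_upwards [eventually_ne_nhds hz0] with w hw
      exact hzeq w hw
  have hA : AnalyticOnNhd ℂ h (ball 0 1) := hdOn.analyticOnNhd hBo
  have hne : ∀ z ∈ ball (0:ℂ) 1, h z ≠ 0 := by
    intro z hz
    rcases eq_or_ne z 0 with rfl | hz0
    · rw [h0']; exact one_ne_zero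
    · rw [hzeq z hz0]; exact div_ne_zero (gne z hz hz0) hz0
  set p : ℂ → ℂ := fun z => deriv g z / h z with hp
  have pA : AnalyticOnNhd ℂ p (ball 0 1) := fun z hz => (g'A z hz).div (hA z hz) (hne z hz)
  have p0 : p 0 = 1 := by rw [hp]; simp [h0', h1]
  have ppos : ∀ z ∈ ball (0:ℂ) 1, 0 < (p z).re := by
    intro z hz
    rcases eq_or_ne z 0 with rfl | hz0
    · rw [p0]; norm_num
    · have hpz : p z = z * deriv g z / g z := by
        rw [hp]; dsimp only; rw [hzeq z hz0, div_div_eq_mul_div]; ring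
      rw [hpz]; exact hst z hz hz0
  have pderiv_eq : ∀ᶠ z in nhds (0:ℂ), deriv g z = p z * h z := by
    filter_upwards [hBo.mem_nhds mem0] with z hz
    rw [hp]; dsimp only; rw [div_mul_cancel₀ _ (hne z hz)]
  have pne1 : ∀ z ∈ ball (0:ℂ) 1, p z + 1 ≠ 0 := by
    intro z hz H
    have h2 := ppos z hz
    have h3 : (p z + 1).re = 0 := by rw [H]; simp
    rw [Complex.add_re, Complex.one_re] at h3
    linarith
  set ω : ℂ → ℂ := fun z => (p z - 1) / (p z + 1) with hω
  have ωA : AnalyticOnNhd ℂ ω (ball 0 1) := fun z hz =>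
    ((pA z hz).sub analyticAt_const).div ((pA z hz).add analyticAt_const) (pne1 z hz)
  have ω0 : ω 0 = 0 := by rw [hω]; simp [p0]
  have ωlt : ∀ z ∈ ball (0:ℂ) 1, ‖ω z‖ < 1 := by
    intro z hz
    rw [hω]
    dsimp only
    rw [norm_div]
    rw [div_lt_one (norm_pos_iff.mpr (pne1 z hz))]
    have hre := ppos z hz
    have key : Complex.normSq (p z - 1) < Complex.normSq (p z + 1) := by
      simp only [Complex.normSq_apply, Complex.sub_re, Complex.sub_im, Complex.add_re,
        Complex.add_im, Complex.one_re, Complex.one_im]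
      nlinarith
    rw [Complex.norm_def, Complex.norm_def]
    exact Real.sqrt_lt_sqrt (Complex.normSq_nonneg _) key
  have ωdOn : DifferentiableOn ℂ ω (ball 0 1) := fun z hz =>
    (ωA z hz).differentiableAt.differentiableWithinAt
  have ωmaps : MapsTo ω (ball (0:ℂ) 1) (ball (ω 0) 1) := by
    rw [ω0]
    intro z hz
    rw [mem_ball_zero_iff]
    exact ωlt z hz
  set φ : ℂ → ℂ := dslope ω 0 with hφ
  have φbd : ∀ z ∈ ball (0:ℂ) 1, ‖φ z‖ ≤ 1 := by
    intro z hz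
    have := Complex.norm_dslope_le_div_of_mapsTo_ball ωdOn (ωmaps.mono_right ball_subset_closedBall) hz
    rw [hφ]
    simpa using this
  have φA0 : AnalyticAt ℂ φ 0 := by
    obtain ⟨ps, hps⟩ := ωA 0 mem0
    exact ⟨_, hps.has_fpower_series_dslope_fslope⟩
  have φzeq : ∀ z : ℂ, z ≠ 0 → φ z = ω z / z := by
    intro z hz0
    rw [hφ, dslope_of_ne _ hz0, slope_def_field, ω0]
    simp
  have ωeq : ∀ z : ℂ, ω z = z * φ z := by
    intro z
    rcases eq_or_ne z 0 with rfl | hz0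
    · simp [ω0]
    · rw [φzeq z hz0]; field_simp
  have φdOn : DifferentiableOn ℂ φ (ball 0 1) := by
    intro z hz
    rcases eq_or_ne z 0 with rfl | hz0
    · exact φA0.differentiableAt.differentiableWithinAt
    · have hd : DifferentiableAt ℂ (fun w => ω w / w) z :=
        ((ωA z hz).differentiableAt).div differentiableAt_id hz0
      refine (hd.congr_of_eventuallyEq ?_).differentiableWithinAt
      filter_upwards [eventually_ne_nhds hz0] with w hw
      exact φzeq w hw
  have φA : AnalyticOnNhd ℂ φ (ball 0 1) := φdOn.analyticOnNhd hBo
  have hr1 : ‖φ 0‖ ≤ 1 := φbd 0 mem0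
  -- Schwarz–Pick second coefficient bound
  have hw2bd : ‖deriv φ 0‖ ≤ 1 - ‖φ 0‖ ^ 2 := by
    rcases eq_or_lt_of_le hr1 with hc | hlt
    · -- ‖φ 0‖ = 1 : φ is constant
      have hmax : IsMaxOn (norm ∘ φ) (ball (0:ℂ) 1) 0 := by
        intro z hz
        simp only [Set.mem_setOf_eq, Function.comp_apply, hc]
        exact φbd z hz
      have hconst := Complex.eqOn_of_isPreconnected_of_isMaxOn_norm
        (convex_ball (0:ℂ) 1).isPreconnected hBo φdOn mem0 hmax
      have hev : φ =ᶠ[nhds (0:ℂ)] fun _ => φ 0 :=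
        Filter.eventually_of_mem (hBo.mem_nhds mem0) (fun z hz => hconst hz)
      rw [hev.deriv_eq, deriv_const, hc]
      simp
    · -- ‖φ 0‖ < 1
      have φlt : ∀ z ∈ ball (0:ℂ) 1, ‖φ z‖ < 1 := by
        intro z hz
        rcases lt_or_eq_of_le (φbd z hz) with H | H
        · exact H
        · exfalso
          have hmax : IsMaxOn (norm ∘ φ) (ball (0:ℂ) 1) z := by
            intro w hw
            simp only [Set.mem_setOf_eq, Function.comp_apply, H]
            exact φbd w hw
          have hconst := Complex.eqOn_of_isPreconnected_of_isMaxOn_norm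
            (convex_ball (0:ℂ) 1).isPreconnected hBo φdOn hz hmax
          have h00 : φ 0 = φ z := hconst mem0
          rw [h00, H] at hlt
          exact lt_irrefl _ hlt
      set q : ℂ := (starRingEnd ℂ) (φ 0) with hq
      have hqn : ‖q‖ = ‖φ 0‖ := by rw [hq]; exact RCLike.norm_conj _
      have den_ne : ∀ z ∈ ball (0:ℂ) 1, (1 : ℂ) - q * φ z ≠ 0 := by
        intro z hz H
        have h1' : ‖q * φ z‖ < 1 := by
          rw [norm_mul, hqn]
          calc ‖φ 0‖ * ‖φ z‖ ≤ 1 * ‖φ z‖ :=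
                mul_le_mul_of_nonneg_right hr1 (norm_nonneg _)
            _ = ‖φ z‖ := one_mul _
            _ < 1 := φlt z hz
        have : (1:ℂ) = q * φ z := sub_eq_zero.mp H
        rw [← this] at h1'
        simp at h1'
      set ψ : ℂ → ℂ := fun z => (φ z - φ 0) / (1 - q * φ z) with hψ
      have ψdOn : DifferentiableOn ℂ ψ (ball (0:ℂ) 1) := by
        intro z hz
        exact (((φA z hz).sub analyticAt_const).div
          (analyticAt_const.sub (analyticAt_const.mul (φA z hz)))
          (den_ne z hz)).differentiableAt.differentiableWithinAt
      have ψ0 : ψ 0 = 0 := by rw [hψ]; simp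
      have ψlt : ∀ z ∈ ball (0:ℂ) 1, ‖ψ z‖ < 1 := by
        intro z hz
        rw [hψ]
        dsimp only
        rw [norm_div, div_lt_one (norm_pos_iff.mpr (den_ne z hz))]
        exact moebius_lt hlt (φlt z hz)
      have ψmaps : MapsTo ψ (ball (0:ℂ) 1) (ball (ψ 0) 1) := by
        rw [ψ0]
        intro z hz
        rw [mem_ball_zero_iff]
        exact ψlt z hz
      have hSch := Complex.norm_dslope_le_div_of_mapsTo_ball ψdOn (ψmaps.mono_right ball_subset_closedBall) mem0
      rw [dslope_same] at hSch
      have hSch' : ‖deriv ψ 0‖ ≤ 1 := by simpa using hSch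
      -- compute deriv ψ 0
      have hφd : DifferentiableAt ℂ φ 0 := φA0.differentiableAt
      have hud : DifferentiableAt ℂ (fun z => φ z - φ 0) 0 := hφd.sub_const _
      have hvd : DifferentiableAt ℂ (fun z => (1:ℂ) - q * φ z) 0 :=
        (differentiableAt_const _).sub ((differentiableAt_const _).mul hφd)
      have hv0 : (1:ℂ) - q * φ 0 = ((1 - ‖φ 0‖ ^ 2 : ℝ) : ℂ) := by
        have : q * φ 0 = ((‖φ 0‖ ^ 2 : ℝ) : ℂ) := by
          rw [hq, mul_comm, Complex.mul_conj, Complex.normSq_eq_norm_sq]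
        rw [this]
        push_cast
        ring
      have hv0ne : (1:ℂ) - q * φ 0 ≠ 0 := den_ne 0 mem0
      have hdψ : deriv ψ 0 = deriv φ 0 / (1 - q * φ 0) := by
        rw [hψ]
        rw [deriv_fun_div hud hvd hv0ne]
        rw [deriv_sub_const, deriv_const_sub, deriv_const_mul _ hφd, sub_self, zero_mul,
          sub_zero]
        field_simp
      rw [hdψ, hv0] at hSch'
      rw [norm_div] at hSch'
      have hpos : (0:ℝ) < 1 - ‖φ 0‖ ^ 2 := by nlinarith [norm_nonneg (φ 0)]
      have hnorm1 : ‖((1 - ‖φ 0‖ ^ 2 : ℝ) : ℂ)‖ = 1 - ‖φ 0‖ ^ 2 := by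
        rw [Complex.norm_real, Real.norm_eq_abs, abs_of_pos hpos]
      rw [hnorm1] at hSch'
      rw [div_le_one hpos] at hSch'
      simpa using hSch'
  -- derivative bookkeeping
  have did : deriv (fun z : ℂ => z) = fun _ => (1:ℂ) := by
    funext z; exact deriv_id z
  obtain ⟨G1, G2, G3⟩ := deriv_helper (u := fun z : ℂ => z) (v := h) analyticAt_id hA0
    (Filter.Eventually.of_forall geq)
  have E2 : deriv (deriv g) 0 = 2 * deriv h 0 := by
    rw [G2, did]; simp
  have E3 : deriv (deriv (deriv g)) 0 = 3 * deriv (deriv h) 0 := by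
    rw [G3, did]; simp
  obtain ⟨P1, P2, -⟩ := deriv_helper (pA 0 mem0) hA0 pderiv_eq
  have P1' : deriv (deriv g) 0 = deriv p 0 + deriv h 0 := by
    rw [P1, h0', p0]; ring
  have P2' : deriv (deriv (deriv g)) 0
      = deriv (deriv p) 0 + 2 * (deriv p 0 * deriv h 0) + deriv (deriv h) 0 := by
    rw [P2, h0', p0]; ring
  obtain ⟨W1, W2, -⟩ := deriv_helper (u := fun z : ℂ => z) (v := φ) analyticAt_id φA0
    (Filter.Eventually.of_forall ωeq)
  have W1' : deriv ω 0 = φ 0 := by rw [W1, did]; simp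
  have W2' : deriv (deriv ω) 0 = 2 * deriv φ 0 := by rw [W2, did]; simp
  have hfm : (fun z => p z - 1) =ᶠ[nhds (0:ℂ)] fun z => ω z * (p z + 1) := by
    filter_upwards [hBo.mem_nhds mem0] with z hz
    rw [hω]; dsimp only; rw [div_mul_cancel₀ _ (pne1 z hz)]
  obtain ⟨M1, M2, -⟩ := deriv_helper (u := ω) (v := fun z => p z + 1) (ωA 0 mem0)
    ((pA 0 mem0).add analyticAt_const) hfm
  have dsubf : deriv (fun z => p z - 1) = deriv p := funext fun z => deriv_sub_const 1
  have daddf : deriv (fun z => p z + 1) = deriv p := funext fun z => deriv_add_const 1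
  rw [dsubf] at M1 M2
  have M1' : deriv p 0 = 2 * φ 0 := by
    rw [M1, daddf, ω0, p0, W1']; ring
  have M2' : deriv (deriv p) 0 = 4 * deriv φ 0 + 4 * φ 0 ^ 2 := by
    rw [M2, daddf, ω0, p0, W1', W2', M1']; ring
  have hh1 : deriv h 0 = 2 * φ 0 := by linear_combination P1' - E2 + M1'
  have hd2 : deriv (deriv g) 0 = 4 * φ 0 := by linear_combination E2 + 2 * hh1
  have hh2 : deriv (deriv h) 0 = 2 * deriv φ 0 + 6 * φ 0 ^ 2 := by
    linear_combination (-1/2 : ℂ) * E3 + (1/2 : ℂ) * P2' + (1/2 : ℂ) * M2'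
      + deriv h 0 * M1' + 2 * φ 0 * hh1
  have hd3 : deriv (deriv (deriv g)) 0 = 6 * deriv φ 0 + 18 * φ 0 ^ 2 := by
    linear_combination E3 + 3 * hh2
  have it2 : iteratedDeriv 2 g 0 = deriv (deriv g) 0 := by
    rw [show iteratedDeriv 2 g = deriv (iteratedDeriv 1 g) from iteratedDeriv_succ,
      iteratedDeriv_one]
  have it3 : iteratedDeriv 3 g 0 = deriv (deriv (deriv g)) 0 := by
    rw [show iteratedDeriv 3 g = deriv (iteratedDeriv 2 g) from iteratedDeriv_succ,
      show iteratedDeriv 2 g = deriv (iteratedDeriv 1 g) from iteratedDeriv_succ,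
      iteratedDeriv_one]
  rw [it2, it3, hd2, hd3]
  have key : 2 * ((4 * φ 0) / 2) ^ 2 * ((6 * deriv φ 0 + 18 * φ 0 ^ 2) / 6)
      - ((6 * deriv φ 0 + 18 * φ 0 ^ 2) / 6) ^ 2 - 2 * ((4 * φ 0) / 2) ^ 2 + 1
      = (5 * φ 0 ^ 2 - 1) * (3 * φ 0 ^ 2 - 1) + deriv φ 0 * (2 * φ 0 ^ 2 - deriv φ 0) := by
    ring
  rw [key]
  have hr0 : (0:ℝ) ≤ ‖φ 0‖ := norm_nonneg _
  have hs0 : (0:ℝ) ≤ ‖deriv φ 0‖ := norm_nonneg _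
  have n1 : ‖5 * φ 0 ^ 2 - 1‖ ≤ 5 * ‖φ 0‖ ^ 2 + 1 := by
    calc ‖5 * φ 0 ^ 2 - 1‖ ≤ ‖5 * φ 0 ^ 2‖ + ‖(1:ℂ)‖ := norm_sub_le _ _
      _ = 5 * ‖φ 0‖ ^ 2 + 1 := by simp [norm_mul, norm_pow]
  have n2 : ‖3 * φ 0 ^ 2 - 1‖ ≤ 3 * ‖φ 0‖ ^ 2 + 1 := by
    calc ‖3 * φ 0 ^ 2 - 1‖ ≤ ‖3 * φ 0 ^ 2‖ + ‖(1:ℂ)‖ := norm_sub_le _ _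
      _ = 3 * ‖φ 0‖ ^ 2 + 1 := by simp [norm_mul, norm_pow]
  have n3 : ‖2 * φ 0 ^ 2 - deriv φ 0‖ ≤ 2 * ‖φ 0‖ ^ 2 + ‖deriv φ 0‖ := by
    calc ‖2 * φ 0 ^ 2 - deriv φ 0‖ ≤ ‖2 * φ 0 ^ 2‖ + ‖deriv φ 0‖ := norm_sub_le _ _
      _ = 2 * ‖φ 0‖ ^ 2 + ‖deriv φ 0‖ := by simp [norm_mul, norm_pow]
  calc ‖(5 * φ 0 ^ 2 - 1) * (3 * φ 0 ^ 2 - 1) + deriv φ 0 * (2 * φ 0 ^ 2 - deriv φ 0)‖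
      ≤ ‖(5 * φ 0 ^ 2 - 1) * (3 * φ 0 ^ 2 - 1)‖ + ‖deriv φ 0 * (2 * φ 0 ^ 2 - deriv φ 0)‖ :=
        norm_add_le _ _
    _ = ‖5 * φ 0 ^ 2 - 1‖ * ‖3 * φ 0 ^ 2 - 1‖ + ‖deriv φ 0‖ * ‖2 * φ 0 ^ 2 - deriv φ 0‖ := by
        rw [norm_mul, norm_mul]
    _ ≤ (5 * ‖φ 0‖ ^ 2 + 1) * (3 * ‖φ 0‖ ^ 2 + 1)
        + ‖deriv φ 0‖ * (2 * ‖φ 0‖ ^ 2 + ‖deriv φ 0‖) := by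
        gcongr
    _ ≤ 24 := by nlinarith [sq_nonneg (‖φ 0‖ ^ 2 - 1), sq_nonneg (‖φ 0‖), mul_nonneg hr0 hs0]
end

section
/- Fix α with 0 ≤ α < 1. If g is analytic and univalent on the unit disk with g(0)=0, g'(0)=1, and Re(z g'(z)/g(z)) > α for all z in the unit disk, and g(z) = z + b₂z² + b₃z³ + ..., then |b₂² − b₃²| ≤ (1−α)²(4α² − 12α + 13). -/
open Complex Metric Set MeasureTheory intervalIntegral Filter

lemma conj_intervalIntegral (f : ℝ → ℂ) (a b : ℝ) :
    (starRingEnd ℂ) (∫ θ in a..b, f θ) = ∫ θ in a..b, (starRingEnd ℂ) (f θ) := by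
  rcases le_total a b with h | h
  · rw [integral_of_le h, integral_of_le h, integral_conj]
  · rw [integral_of_ge h, integral_of_ge h, map_neg, integral_conj]

lemma exp_pow_integral_zero (m : ℕ) :
    (∫ θ in (0:ℝ)..2*Real.pi, ((Complex.exp (θ * I))⁻¹)^(m+1)) = 0 := by
  have h1 : ∀ θ : ℝ, ((Complex.exp (θ * I))⁻¹)^(m+1) = Complex.exp ((-(m+1) * I) * θ) := by
    intro θ
    rw [← Complex.exp_neg, ← Complex.exp_nat_mul]
    congr 1
    push_cast
    ring
  have hc : (-(m+1) * I : ℂ) ≠ 0 := by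
    refine mul_ne_zero ?_ I_ne_zero
    intro h
    have := congrArg Complex.re h
    simp at this
    linarith [this]
  rw [intervalIntegral.integral_congr (fun θ _ => h1 θ), integral_exp_mul_complex hc,
    show ((-(m+1) * I) * ((2*Real.pi:ℝ):ℂ)) = ((-(m+1):ℤ):ℂ) * (2*Real.pi*I) by push_cast; ring,
    Complex.exp_int_mul_two_pi_mul_I]
  simp

lemma carath_bound (α : ℝ) (P : ℂ → ℂ)
    (hP : DifferentiableOn ℂ P (ball (0:ℂ) 1))
    (hre : ∀ z ∈ ball (0:ℂ) 1, α < (P z).re)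
    (hP0 : P 0 = 1) (m : ℕ) :
    ‖iteratedDeriv (m+1) P 0‖ ≤ (m+1).factorial * (2 * (1 - α)) := by
  have key : ∀ r : ℝ, r ∈ Set.Ioo (0:ℝ) 1 →
      ‖iteratedDeriv (m+1) P 0‖ * r^(m+1) ≤ (m+1).factorial * (2 * (1 - α)) := by
    intro r hr
    obtain ⟨hr0, hr1⟩ := hr
    have hπ := Real.two_pi_pos
    have hsub : closedBall (0:ℂ) r ⊆ ball (0:ℂ) 1 := closedBall_subset_ball hr1
    set R : NNReal := ⟨r, hr0.le⟩ with hRdef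
    have hRr : (R : ℝ) = r := rfl
    have hPd : DifferentiableOn ℂ P (closedBall (0:ℂ) R) := hP.mono (by rw [hRr]; exact hsub)
    have hps : HasFPowerSeriesOnBall P (cauchyPowerSeries P 0 R) 0 R :=
      hPd.hasFPowerSeriesOnBall (by exact_mod_cast hr0)
    set κ : ℝ → ℂ := circleMap 0 r with hκdef
    have hκ : ∀ θ, κ θ = (r:ℂ) * Complex.exp (θ * I) := fun θ => by
      simp [hκdef, circleMap]
    have hκ0 : ∀ θ, κ θ ≠ 0 := fun θ => circleMap_ne_center hr0.ne'
    have hκmem : ∀ θ, κ θ ∈ ball (0:ℂ) 1 := fun θ => hsub (circleMap_mem_closedBall 0 hr0.le θ)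
    set q : ℝ → ℂ := fun θ => P (κ θ) with hqdef
    have hqc : Continuous q := by
      rw [← continuousOn_univ]
      exact (hP.continuousOn.comp (continuous_circleMap 0 r).continuousOn
        (fun θ _ => hκmem θ))
    set e : ℝ → ℂ := fun θ => Complex.exp (θ * I) with hedef
    have he0 : ∀ θ, e θ ≠ 0 := fun θ => Complex.exp_ne_zero _
    have hec : Continuous e := by
      apply Complex.continuous_exp.comp
      exact (Complex.continuous_ofReal.mul continuous_const)
    have habse : ∀ θ, ‖e θ‖ = 1 := fun θ => by
      simp [hedef, Complex.norm_exp]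
    have hconje : ∀ θ, (starRingEnd ℂ) (e θ) = (e θ)⁻¹ := fun θ => by
      rw [hedef, ← Complex.exp_conj, ← Complex.exp_neg]
      congr 1
      simp [Complex.ext_iff]
    have hrC : ((r:ℝ):ℂ) ≠ 0 := by exact_mod_cast hr0.ne'
    -- generic circle-integral unfolding
    have hcircle : ∀ k : ℕ, (∮ z in C(0, (R:ℝ)), (1/(z-0))^k • (z-0)⁻¹ • P z)
        = (I * ((r:ℂ)⁻¹)^k) * ∫ θ in (0:ℝ)..2*Real.pi, ((e θ)⁻¹)^k * q θ := by
      intro k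
      rw [circleIntegral, ← intervalIntegral.integral_const_mul]
      apply intervalIntegral.integral_congr
      intro θ _
      show deriv (circleMap 0 r) θ • ((1/(κ θ - 0))^k • (κ θ - 0)⁻¹ • q θ)
          = (I * ((r:ℂ)⁻¹)^k) * (((e θ)⁻¹)^k * q θ)
      rw [deriv_circleMap, smul_eq_mul, smul_eq_mul, smul_eq_mul, sub_zero]
      show (κ θ * I) * ((1/(κ θ))^k * ((κ θ)⁻¹ * q θ)) = _
      rw [hκ θ]
      have h1 : Complex.exp (θ * I) ≠ 0 := Complex.exp_ne_zero _
      field_simp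
      ring
    -- Fact Z'
    have hZ : (∫ θ in (0:ℝ)..2*Real.pi, (e θ)^(m+1) * q θ) = 0 := by
      have hF0 : (∮ z in C(0, r), z^m * P z) = 0 := by
        refine circleIntegral_eq_zero_of_differentiable_on_off_countable hr0.le
          Set.countable_empty ?_ ?_
        · exact ((continuous_pow m).continuousOn).mul (hP.continuousOn.mono hsub)
        · intro z hz
          have hz1 : z ∈ ball (0:ℂ) 1 := ball_subset_ball hr1.le hz.1
          exact (differentiableAt_pow m).mul (hP.differentiableAt (isOpen_ball.mem_nhds hz1))
      rw [circleIntegral] at hF0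
      have heq : EqOn (fun θ : ℝ => deriv (circleMap 0 r) θ •
            ((circleMap 0 r θ)^m * P (circleMap 0 r θ)))
          (fun θ : ℝ => (I * (r:ℂ)^(m+1)) * ((e θ)^(m+1) * q θ)) (uIcc 0 (2*Real.pi)) := by
        intro θ _
        show deriv (circleMap 0 r) θ • ((κ θ)^m * q θ) = (I * (r:ℂ)^(m+1)) * ((e θ)^(m+1) * q θ)
        rw [deriv_circleMap, smul_eq_mul]
        show (κ θ * I) * ((κ θ)^m * q θ) = _
        rw [hκ θ]
        ring
      rw [intervalIntegral.integral_congr heq, intervalIntegral.integral_const_mul] at hF0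
      rcases mul_eq_zero.mp hF0 with h | h
      · exact absurd h (mul_ne_zero I_ne_zero (pow_ne_zero _ hrC))
      · exact h
    -- Fact C'
    have hC : (∫ θ in (0:ℝ)..2*Real.pi, ((e θ)⁻¹)^(m+1) * (starRingEnd ℂ) (q θ)) = 0 := by
      have := congrArg (starRingEnd ℂ) hZ
      rw [conj_intervalIntegral, map_zero] at this
      rw [← this]
      apply intervalIntegral.integral_congr
      intro θ _
      simp only [map_mul, map_pow, hconje]
    -- Fact E'
    have hE : (∫ θ in (0:ℝ)..2*Real.pi, ((e θ)⁻¹)^(m+1)) = 0 := exp_pow_integral_zero m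
    -- Mean value
    have hM : (∫ θ in (0:ℝ)..2*Real.pi, q θ) = 2*Real.pi := by
      have h0c : (cauchyPowerSeries P 0 (R:ℝ)) 0 (fun _ => 1) = 1 := by
        rw [hps.coeff_zero]; exact hP0
      rw [cauchyPowerSeries_apply, hcircle 0] at h0c
      simp only [pow_zero, one_mul, mul_one, smul_eq_mul] at h0c
      have h2 : (2*(Real.pi:ℂ)*I) ≠ 0 := by
        simp [Complex.ext_iff, Real.pi_ne_zero]
      field_simp at h0c
      exact mul_left_cancel₀ I_ne_zero (by linear_combination I * h0c)
    -- coefficient formula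
    set a : ℂ := cauchyPowerSeries P 0 R (m+1) (fun _ => 1) with hadef
    set S : ℂ := ∫ θ in (0:ℝ)..2*Real.pi, ((e θ)⁻¹)^(m+1) * q θ with hSdef
    have hA : (2*(Real.pi:ℂ)) * (r:ℂ)^(m+1) * a = S := by
      have hac : a = (2*(Real.pi:ℂ)*I)⁻¹ • (I * ((r:ℂ))⁻¹^(m+1) * S) := by
        rw [hadef, cauchyPowerSeries_apply, hcircle (m+1), ← hSdef]
      rw [hac, smul_eq_mul]
      have hπc : ((Real.pi:ℝ):ℂ) ≠ 0 := by exact_mod_cast Real.pi_ne_zero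
      field_simp
      have hr' : (r:ℂ)^(m+1) * ((r:ℂ)⁻¹)^(m+1) = 1 := by rw [← mul_pow, mul_inv_cancel₀ hrC, one_pow]
      linear_combination S * hr'
    have hfact : ((m+1).factorial : ℂ) * a = iteratedDeriv (m+1) P 0 := by
      have h1 := hps.factorial_smul (1:ℂ) (m+1)
      rw [iteratedDeriv_eq_iteratedFDeriv]
      rw [← h1]
      simp [hadef]
    -- rewrite S using positivity of real part
    have hSbound : ‖S‖ ≤ 2*Real.pi * (2 * (1 - α)) := by
      have hqint : IntervalIntegrable q volume 0 (2*Real.pi) := hqc.intervalIntegrable _ _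
      have heinv : Continuous fun θ => ((e θ)⁻¹)^(m+1) := (hec.inv₀ he0).pow _
      have hconjc : Continuous fun θ => (starRingEnd ℂ) (q θ) :=
        Complex.continuous_conj.comp hqc
      have hint1 : IntervalIntegrable (fun θ => ((e θ)⁻¹)^(m+1) * q θ)
          volume 0 (2*Real.pi) := (heinv.mul hqc).intervalIntegrable _ _
      have hint2 : IntervalIntegrable (fun θ => ((e θ)⁻¹)^(m+1) * (starRingEnd ℂ) (q θ))
          volume 0 (2*Real.pi) := (heinv.mul hconjc).intervalIntegrable _ _
      have hint3 : IntervalIntegrable (fun θ => ((e θ)⁻¹)^(m+1) * (2*(α:ℂ)))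
          volume 0 (2*Real.pi) := (heinv.mul continuous_const).intervalIntegrable _ _
      have hST : S = ∫ θ in (0:ℝ)..2*Real.pi,
          ((e θ)⁻¹)^(m+1) * (((2*((q θ).re - α) : ℝ) : ℂ)) := by
        have hsplit : ∀ θ:ℝ, ((e θ)⁻¹)^(m+1) * (((2*((q θ).re - α) : ℝ) : ℂ))
            = ((e θ)⁻¹)^(m+1) * q θ + ((e θ)⁻¹)^(m+1) * (starRingEnd ℂ) (q θ)
              - ((e θ)⁻¹)^(m+1) * (2*(α:ℂ)) := by
          intro θ
          have h := Complex.add_conj (q θ)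
          calc ((e θ)⁻¹)^(m+1) * (((2*((q θ).re - α) : ℝ) : ℂ))
              = ((e θ)⁻¹)^(m+1) * ((((2*(q θ).re : ℝ)) : ℂ) - 2*(α:ℂ)) := by
                push_cast; ring
            _ = _ := by rw [← h]; ring
        rw [intervalIntegral.integral_congr (fun θ _ => hsplit θ),
          intervalIntegral.integral_sub (hint1.add hint2) hint3,
          intervalIntegral.integral_add hint1 hint2, hC, intervalIntegral.integral_mul_const,
          hE, hSdef]
        ring
      have hre_int : (∫ θ in (0:ℝ)..2*Real.pi, (q θ).re) = 2*Real.pi := by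
        have hcomm := Complex.reCLM.intervalIntegral_comp_comm hqint
        have : (∫ θ in (0:ℝ)..2*Real.pi, Complex.reCLM (q θ)) = Complex.reCLM
            (∫ θ in (0:ℝ)..2*Real.pi, q θ) := hcomm
        simpa [hM] using this
      have hnorm : ∀ θ ∈ Set.uIcc (0:ℝ) (2*Real.pi),
          ‖((e θ)⁻¹)^(m+1) * (((2*((q θ).re - α) : ℝ) : ℂ))‖ = 2*((q θ).re - α) := by
        intro θ _
        rw [norm_mul, norm_pow, norm_inv]
        have h1 : ‖e θ‖ = 1 := by rw [habse]
        rw [h1, Complex.norm_real]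
        have h2 : (0:ℝ) ≤ 2*((q θ).re - α) := by
          have h3 := hre (κ θ) (hκmem θ)
          have hq : (q θ).re = (P (κ θ)).re := rfl
          linarith
        simp only [inv_one, one_pow, one_mul, Real.norm_eq_abs]
        exact _root_.abs_of_nonneg h2
      have hrecont : Continuous fun θ : ℝ => (q θ).re := Complex.continuous_re.comp hqc
      calc ‖S‖
          = ‖∫ θ in (0:ℝ)..2*Real.pi, ((e θ)⁻¹)^(m+1) * (((2*((q θ).re - α) : ℝ) : ℂ))‖ := by
            rw [← hST]
        _ ≤ ∫ θ in (0:ℝ)..2*Real.pi,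
              ‖((e θ)⁻¹)^(m+1) * (((2*((q θ).re - α) : ℝ) : ℂ))‖ :=
            intervalIntegral.norm_integral_le_integral_norm hπ.le
        _ = ∫ θ in (0:ℝ)..2*Real.pi, 2*((q θ).re - α) :=
            intervalIntegral.integral_congr hnorm
        _ = 2*(∫ θ in (0:ℝ)..2*Real.pi, (q θ).re) - (2*α)*(2*Real.pi - 0) := by
            have : (fun θ : ℝ => 2*((q θ).re - α)) = fun θ : ℝ => 2*(q θ).re - 2*α := by
              funext θ; ring
            rw [this, intervalIntegral.integral_sub
              ((show Continuous fun θ : ℝ => 2*(q θ).re from continuous_const.mul hrecont).intervalIntegrable _ _)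
              (continuous_const.intervalIntegrable _ _),
              intervalIntegral.integral_const_mul, intervalIntegral.integral_const]
            simp
            ring
        _ = 2*Real.pi * (2 * (1 - α)) := by rw [hre_int]; ring
    -- combine
    have habs : ‖iteratedDeriv (m+1) P 0‖ * r^(m+1)
        = ((m+1).factorial : ℝ) * (‖S‖ / (2*Real.pi)) := by
      rw [← hfact, ← hA]
      rw [norm_mul, norm_mul, norm_mul]
      simp [Complex.norm_real, abs_of_pos hr0, abs_of_pos Real.pi_pos,
        norm_pow]
      field_simp
    rw [habs]
    have : ‖S‖ / (2*Real.pi) ≤ 2 * (1-α) := by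
      rw [div_le_iff₀ hπ]
      linarith [hSbound]
    have hfpos : (0:ℝ) ≤ ((m+1).factorial : ℝ) := by positivity
    calc ((m+1).factorial : ℝ) * (‖S‖ / (2*Real.pi)) ≤ ((m+1).factorial : ℝ) * (2*(1-α)) := by
          exact mul_le_mul_of_nonneg_left this hfpos
      _ = (m+1).factorial * (2 * (1 - α)) := rfl
  -- take r → 1
  have ht : Tendsto (fun r : ℝ => ‖iteratedDeriv (m+1) P 0‖ * r^(m+1))
      (nhdsWithin 1 (Set.Iio 1)) (nhds (‖iteratedDeriv (m+1) P 0‖)) := by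
    have hcont : Continuous (fun r : ℝ => ‖iteratedDeriv (m+1) P 0‖ * r^(m+1)) := by
      continuity
    have := hcont.tendsto 1
    simp at this
    exact this.mono_left nhdsWithin_le_nhds
  refine le_of_tendsto ht ?_
  filter_upwards [Ioo_mem_nhdsLT_of_mem (by constructor <;> norm_num : (1:ℝ) ∈ Set.Ioc 0 1)]
    with r hr using key r hr

theorem toeplitz_T22_starlike_order (α : ℝ) (hα0 : 0 ≤ α) (hα1 : α < 1)
    (g : ℂ → ℂ)
    (hg : DifferentiableOn ℂ g (ball (0:ℂ) 1))
    (hinj : Set.InjOn g (ball (0:ℂ) 1))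
    (h0 : g 0 = 0) (h1 : deriv g 0 = 1)
    (hst : ∀ z ∈ ball (0:ℂ) 1, z ≠ 0 → α < (z * deriv g z / g z).re) :
    ‖(iteratedDeriv 2 g 0 / 2) ^ 2 - (iteratedDeriv 3 g 0 / 6) ^ 2‖
      ≤ (1 - α) ^ 2 * (4 * α ^ 2 - 12 * α + 13) := by
  have hop : IsOpen (ball (0:ℂ) 1) := isOpen_ball
  have h0mem : (0:ℂ) ∈ ball (0:ℂ) 1 := mem_ball_self one_pos
  have hga : AnalyticOnNhd ℂ g (ball (0:ℂ) 1) := hg.analyticOnNhd hop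
  have hgz : ∀ z ∈ ball (0:ℂ) 1, z ≠ 0 → g z ≠ 0 := by
    intro z hz hz0 hgz0
    exact hz0 (hinj hz h0mem (by rw [hgz0, h0]))
  have hslope : slope g 0 = fun w => g w / w := by
    funext w
    rw [slope_def_field, h0, sub_zero, sub_zero]
  have hd_an : AnalyticOnNhd ℂ (dslope g 0) (ball (0:ℂ) 1) := by
    intro z hz
    by_cases hz0 : z = 0
    · subst hz0
      obtain ⟨p, hp⟩ := hga 0 h0mem
      exact hp.has_fpower_series_dslope_fslope.analyticAt
    · have ha : AnalyticAt ℂ (fun w => g w / w) z := (hga z hz).div analyticAt_id hz0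
      exact ha.congr (by rw [← hslope]; exact (dslope_eventuallyEq_slope_of_ne g hz0).symm)
  have hdne : ∀ z ∈ ball (0:ℂ) 1, dslope g 0 z ≠ 0 := by
    intro z hz
    by_cases hz0 : z = 0
    · subst hz0
      rw [dslope_same, h1]
      exact one_ne_zero
    · rw [dslope_of_ne g hz0, hslope]
      exact div_ne_zero (hgz z hz hz0) hz0
  set P : ℂ → ℂ := fun z => deriv g z / dslope g 0 z with hPdef
  have hP0 : P 0 = 1 := by
    rw [hPdef]
    simp [dslope_same, h1]
  have hPa : AnalyticOnNhd ℂ P (ball (0:ℂ) 1) :=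
    fun z hz => ((hga.deriv) z hz).div (hd_an z hz) (hdne z hz)
  have hPdiff : DifferentiableOn ℂ P (ball (0:ℂ) 1) := hPa.differentiableOn
  have hPval : ∀ z ∈ ball (0:ℂ) 1, z ≠ 0 → P z = z * deriv g z / g z := by
    intro z hz hz0
    show deriv g z / dslope g 0 z = z * deriv g z / g z
    rw [dslope_of_ne g hz0, hslope]
    rw [div_div_eq_mul_div, div_eq_div_iff (hgz z hz hz0) (hgz z hz hz0)]
    ring
  have hre : ∀ z ∈ ball (0:ℂ) 1, α < (P z).re := by
    intro z hz
    by_cases hz0 : z = 0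
    · rw [hz0, hP0]
      simpa using hα1
    · rw [hPval z hz hz0]
      exact hst z hz hz0
  have E0 : ∀ z ∈ ball (0:ℂ) 1, z * deriv g z = P z * g z := by
    intro z hz
    by_cases hz0 : z = 0
    · rw [hz0, h0]
      ring
    · rw [hPval z hz hz0]
      field_simp [hgz z hz hz0]
      try ring
  -- differentiability facts
  have hDg : ∀ z ∈ ball (0:ℂ) 1, DifferentiableAt ℂ g z :=
    fun z hz => (hga z hz).differentiableAt
  have hDg1 : ∀ z ∈ ball (0:ℂ) 1, DifferentiableAt ℂ (deriv g) z :=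
    fun z hz => (hga.deriv z hz).differentiableAt
  have hDg2 : ∀ z ∈ ball (0:ℂ) 1, DifferentiableAt ℂ (deriv (deriv g)) z :=
    fun z hz => (hga.deriv.deriv z hz).differentiableAt
  have hDg3 : ∀ z ∈ ball (0:ℂ) 1, DifferentiableAt ℂ (deriv (deriv (deriv g))) z :=
    fun z hz => (hga.deriv.deriv.deriv z hz).differentiableAt
  have hDP : ∀ z ∈ ball (0:ℂ) 1, DifferentiableAt ℂ P z :=
    fun z hz => (hPa z hz).differentiableAt
  have hDP1 : ∀ z ∈ ball (0:ℂ) 1, DifferentiableAt ℂ (deriv P) z :=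
    fun z hz => (hPa.deriv z hz).differentiableAt
  have hDP2 : ∀ z ∈ ball (0:ℂ) 1, DifferentiableAt ℂ (deriv (deriv P)) z :=
    fun z hz => (hPa.deriv.deriv z hz).differentiableAt
  have step : ∀ (F₁ F₂ : ℂ → ℂ), (∀ z ∈ ball (0:ℂ) 1, F₁ z = F₂ z) →
      ∀ z ∈ ball (0:ℂ) 1, deriv F₁ z = deriv F₂ z := by
    intro F₁ F₂ h z hz
    exact Filter.EventuallyEq.deriv_eq (Filter.eventuallyEq_of_mem (hop.mem_nhds hz) h)
  have E1 : ∀ z ∈ ball (0:ℂ) 1, deriv g z + z * deriv (deriv g) z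
      = deriv P z * g z + P z * deriv g z := by
    intro z hz
    have hs := step (fun w => w * deriv g w) (fun w => P w * g w) E0 z hz
    rw [deriv_fun_mul differentiableAt_fun_id (hDg1 z hz),
      deriv_fun_mul (hDP z hz) (hDg z hz)] at hs
    simpa using hs
  have E2 : ∀ z ∈ ball (0:ℂ) 1,
      deriv (deriv g) z + (deriv (deriv g) z + z * deriv (deriv (deriv g)) z)
      = (deriv (deriv P) z * g z + deriv P z * deriv g z)
        + (deriv P z * deriv g z + P z * deriv (deriv g) z) := by
    intro z hz
    have hs := step (fun w => deriv g w + w * deriv (deriv g) w)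
      (fun w => deriv P w * g w + P w * deriv g w) E1 z hz
    rw [deriv_fun_add (hDg1 z hz) (differentiableAt_fun_id.fun_mul (hDg2 z hz)),
      deriv_fun_mul differentiableAt_fun_id (hDg2 z hz),
      deriv_fun_add ((hDP1 z hz).fun_mul (hDg z hz)) ((hDP z hz).fun_mul (hDg1 z hz)),
      deriv_fun_mul (hDP1 z hz) (hDg z hz),
      deriv_fun_mul (hDP z hz) (hDg1 z hz)] at hs
    simpa using hs
  have e2 : deriv (deriv g) 0 = 2 * deriv P 0 := by
    have h := E2 0 h0mem
    rw [h0, h1, hP0] at h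
    simp only [mul_zero, zero_mul, mul_one, one_mul, add_zero, zero_add] at h
    linear_combination h
  have e3 : deriv (deriv (deriv g)) 0
      = (3 * deriv (deriv P) 0 + 6 * (deriv P 0)^2) / 2 := by
    have hs := step
      (fun w => deriv (deriv g) w + (deriv (deriv g) w + w * deriv (deriv (deriv g)) w))
      (fun w => (deriv (deriv P) w * g w + deriv P w * deriv g w)
        + (deriv P w * deriv g w + P w * deriv (deriv g) w)) E2 0 h0mem
    rw [deriv_fun_add (hDg2 0 h0mem)
        ((hDg2 0 h0mem).fun_add (differentiableAt_fun_id.fun_mul (hDg3 0 h0mem))),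
      deriv_fun_add (hDg2 0 h0mem) (differentiableAt_fun_id.fun_mul (hDg3 0 h0mem)),
      deriv_fun_mul differentiableAt_fun_id (hDg3 0 h0mem),
      deriv_fun_add (((hDP2 0 h0mem).fun_mul (hDg 0 h0mem)).fun_add ((hDP1 0 h0mem).fun_mul (hDg1 0 h0mem)))
        (((hDP1 0 h0mem).fun_mul (hDg1 0 h0mem)).fun_add ((hDP 0 h0mem).fun_mul (hDg2 0 h0mem))),
      deriv_fun_add ((hDP2 0 h0mem).fun_mul (hDg 0 h0mem)) ((hDP1 0 h0mem).fun_mul (hDg1 0 h0mem)),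
      deriv_fun_add ((hDP1 0 h0mem).fun_mul (hDg1 0 h0mem)) ((hDP 0 h0mem).fun_mul (hDg2 0 h0mem)),
      deriv_fun_mul (hDP2 0 h0mem) (hDg 0 h0mem),
      deriv_fun_mul (hDP1 0 h0mem) (hDg1 0 h0mem),
      deriv_fun_mul (hDP 0 h0mem) (hDg2 0 h0mem)] at hs
    rw [h0, h1, hP0] at hs
    simp only [deriv_id'', mul_zero, zero_mul, mul_one, one_mul, add_zero, zero_add] at hs
    rw [e2] at hs
    linear_combination hs / 2
  -- coefficient bounds
  have hb1 : ‖deriv P 0‖ ≤ 2 * (1 - α) := by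
    have h := carath_bound α P hPdiff hre hP0 0
    simpa [iteratedDeriv_one] using h
  have hb2 : ‖deriv (deriv P) 0‖ ≤ 2 * (2 * (1 - α)) := by
    have h := carath_bound α P hPdiff hre hP0 1
    rw [iteratedDeriv_succ, iteratedDeriv_one] at h
    norm_num [Nat.factorial] at h
    linarith
  -- assemble
  have hg2 : iteratedDeriv 2 g 0 = deriv (deriv g) 0 := by
    rw [iteratedDeriv_succ, iteratedDeriv_one]
  have hg3 : iteratedDeriv 3 g 0 = deriv (deriv (deriv g)) 0 := by
    rw [iteratedDeriv_succ, iteratedDeriv_succ, iteratedDeriv_one]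
  set c1 : ℂ := deriv P 0 with hc1
  set c2 : ℂ := deriv (deriv P) 0 with hc2
  have hb2' : iteratedDeriv 2 g 0 / 2 = c1 := by
    rw [hg2, e2]; ring
  have hb3' : iteratedDeriv 3 g 0 / 6 = c2/4 + c1^2/2 := by
    rw [hg3, e3]; ring
  rw [hb2', hb3']
  set x : ℝ := ‖c1‖ with hx
  set y : ℝ := ‖c2‖ with hy
  have hx0 : 0 ≤ x := norm_nonneg _
  have hy0 : 0 ≤ y := norm_nonneg _
  have htri : ‖c1^2 - (c2/4 + c1^2/2)^2‖
      ≤ x^2 + (y/4 + x^2/2)^2 := by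
    calc ‖c1^2 - (c2/4 + c1^2/2)^2‖
        ≤ ‖c1^2‖ + ‖(c2/4 + c1^2/2)^2‖ := by
          exact norm_sub_le _ _
      _ ≤ x^2 + (y/4 + x^2/2)^2 := by
          rw [norm_pow, norm_pow]
          gcongr
          calc ‖c2/4 + c1^2/2‖ ≤ ‖c2/4‖ + ‖c1^2/2‖ := by
                exact norm_add_le _ _
            _ = y/4 + x^2/2 := by
                rw [norm_div, norm_div, norm_pow]
                norm_num [hx, hy]
  refine htri.trans ?_
  have hA : (0:ℝ) < 1 - α := by linarith
  nlinarith [sq_nonneg (x - 2*(1-α)), sq_nonneg (y/4 + x^2/2),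
    mul_le_mul hb1 hb1 hx0 (by linarith : (0:ℝ) ≤ 2*(1-α)),
    sq_nonneg x, sq_nonneg y, mul_le_mul hb2 hb2 hy0 (by linarith : (0:ℝ) ≤ 2*(2*(1-α))),
    mul_pos hA hA, sq_nonneg (y/4 + x^2/2 - ((1-α) + 2*(1-α)^2))]
end

section
/- Fix α with 0 ≤ α ≤ 2/3. If g is analytic and univalent on the unit disk with g(0)=0, g'(0)=1, and Re(z g'(z)/g(z)) > α for all z in the unit disk, and g(z) = z + b₂z² + b₃z³ + ..., then |2b₂²b₃ − b₃² − 2b₂² + 1| ≤ 12α⁴ − 52α³ + 91α² − 74α + 24. -/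
open Complex Metric Set Filter Topology

lemma coeff_from_series {f : ℂ → ℂ} {p : FormalMultilinearSeries ℂ ℂ ℂ}
    (hp : HasFPowerSeriesAt f p 0) (n : ℕ) :
    iteratedDeriv n f 0 = (n.factorial : ℂ) * p.coeff n := by
  obtain ⟨r, hr⟩ := hp
  have h := hr.factorial_smul (1 : ℂ) n
  rw [iteratedDeriv_eq_iteratedFDeriv, ← h, FormalMultilinearSeries.coeff, nsmul_eq_mul]
  norm_num

lemma real_est (γ x s A : ℝ) (h3 : 1/3 ≤ γ) (h1 : γ ≤ 1) (hx0 : 0 ≤ x) (hx1 : x ≤ 1)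
    (hs0 : 0 ≤ s) (hs : s ≤ 1 - x) (hA : A = |2*γ-1|) :
    γ^2*s^2 + 2*γ^2*A*x*s + γ^2*(1+2*γ)*(6*γ-1)*x^2 + 8*γ^2*x + 1
      ≤ 12*γ^4+4*γ^3+7*γ^2+1 := by
  have hγ0 : (0:ℝ) < γ := by linarith
  have hA0 : 0 ≤ A := hA ▸ abs_nonneg _
  have hA1 : A ≤ 1 := by rw [hA]; rw [abs_le]; constructor <;> linarith
  have hB : 0 ≤ 12*γ^2+4*γ-2*A := by nlinarith
  have step1 : γ^2*s^2 + 2*γ^2*A*x*s + γ^2*(1+2*γ)*(6*γ-1)*x^2 + 8*γ^2*x + 1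
      ≤ γ^2*(1 + (6+2*A)*x + (12*γ^2+4*γ-2*A)*x^2) + 1 := by
    nlinarith [mul_nonneg (sq_nonneg γ) (mul_nonneg (by linarith : (0:ℝ) ≤ 1 - x - s) (by linarith : (0:ℝ) ≤ s + (1 - x))),
      mul_nonneg (mul_nonneg (mul_nonneg (sq_nonneg γ) hA0) hx0) (by linarith : (0:ℝ) ≤ 1 - x - s)]
  have step2 : γ^2*(1 + (6+2*A)*x + (12*γ^2+4*γ-2*A)*x^2) + 1
      ≤ γ^2*(12*γ^2+4*γ+7) + 1 := by
    have h6 : (6+2*A)*x ≤ 6+2*A := by nlinarith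
    have hx2 : x^2 ≤ 1 := by nlinarith
    have h7 : (12*γ^2+4*γ-2*A)*x^2 ≤ 12*γ^2+4*γ-2*A := by
      calc (12*γ^2+4*γ-2*A)*x^2 ≤ (12*γ^2+4*γ-2*A)*1 := mul_le_mul_of_nonneg_left hx2 hB
        _ = 12*γ^2+4*γ-2*A := by ring
    nlinarith [sq_nonneg γ]
  calc _ ≤ γ^2*(1 + (6+2*A)*x + (12*γ^2+4*γ-2*A)*x^2) + 1 := step1
    _ ≤ γ^2*(12*γ^2+4*γ+7) + 1 := step2
    _ = 12*γ^4+4*γ^3+7*γ^2+1 := by ring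

set_option maxHeartbeats 2000000 in
theorem toeplitz_T31_starlike_order (α : ℝ) (hα0 : 0 ≤ α) (hα1 : α ≤ 2/3)
    (g : ℂ → ℂ)
    (hg : DifferentiableOn ℂ g (ball (0:ℂ) 1))
    (hinj : Set.InjOn g (ball (0:ℂ) 1))
    (h0 : g 0 = 0) (h1 : deriv g 0 = 1)
    (hst : ∀ z ∈ ball (0:ℂ) 1, z ≠ 0 → α < (z * deriv g z / g z).re) :
    ‖(2 * (iteratedDeriv 2 g 0 / 2) ^ 2 * (iteratedDeriv 3 g 0 / 6)
      - (iteratedDeriv 3 g 0 / 6) ^ 2 - 2 * (iteratedDeriv 2 g 0 / 2) ^ 2 + 1)‖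
      ≤ 12 * α ^ 4 - 52 * α ^ 3 + 91 * α ^ 2 - 74 * α + 24 := by
  set D : Set ℂ := ball (0:ℂ) 1 with hD
  have h0D : (0:ℂ) ∈ D := mem_ball_self one_pos
  have hDnhds : D ∈ 𝓝 (0:ℂ) := isOpen_ball.mem_nhds h0D
  set γ : ℝ := 1 - α with hγdef
  have hγ1 : γ ≤ 1 := by simp [hγdef]; linarith
  have hγ3 : 1/3 ≤ γ := by simp [hγdef]; linarith
  have hγpos : 0 < γ := by linarith
  set c : ℂ := ((2*γ : ℝ) : ℂ) with hc
  -- g nonvanishing away from 0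
  have hgne : ∀ z ∈ D, z ≠ 0 → g z ≠ 0 := by
    intro z hz hzne hgz
    have := hst z hz hzne
    rw [hgz, div_zero] at this
    simp at this; linarith
  -- u = g(z)/z
  set u : ℂ → ℂ := dslope g 0 with hu
  have hu0 : u 0 = 1 := by rw [hu, dslope_same, h1]
  have hgu : ∀ z : ℂ, g z = z * u z := by
    intro z
    rcases eq_or_ne z 0 with rfl | hz
    · simpa using h0
    · rw [hu, dslope_of_ne _ hz, slope_def_field]
      field_simp [h0]
      rw [h0, sub_zero, sub_zero]; ring
  have huD : DifferentiableOn ℂ u D := (differentiableOn_dslope hDnhds).mpr hg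
  have hua : AnalyticOnNhd ℂ u D := huD.analyticOnNhd isOpen_ball
  have hu'a : AnalyticOnNhd ℂ (deriv u) D := hua.deriv
  have hune : ∀ z ∈ D, u z ≠ 0 := by
    intro z hz
    rcases eq_or_ne z 0 with rfl | hzne
    · rw [hu0]; exact one_ne_zero
    · have := hgne z hz hzne
      rw [hgu z] at this
      exact fun h => this (by rw [h, mul_zero])
  have hgder : ∀ z ∈ D, deriv g z = u z + z * deriv u z := by
    intro z hz
    have hdu : DifferentiableAt ℂ u z := huD.differentiableAt (isOpen_ball.mem_nhds hz)
    have : deriv g z = deriv (fun w => w * u w) z := by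
      congr 1; exact funext hgu
    rw [this, deriv_fun_mul differentiableAt_fun_id hdu, deriv_id'']
    ring
  set a : ℂ → ℂ := fun z => z * deriv u z / u z with ha
  have haQ : ∀ z ∈ D, z ≠ 0 → z * deriv g z / g z = 1 + a z := by
    intro z hz hzne
    rw [hgder z hz, hgu z, ha]
    field_simp [hune z hz]
  have hare : ∀ z ∈ D, α - 1 < (a z).re := by
    intro z hz
    rcases eq_or_ne z 0 with rfl | hzne
    · simp [ha]; linarith
    · have h := hst z hz hzne
      rw [haQ z hz hzne] at h
      simp at h; linarith
  have haD : DifferentiableOn ℂ a D :=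
    (differentiableOn_id.mul hu'a.differentiableOn).div huD hune
  have hdenne : ∀ z ∈ D, a z + c ≠ 0 := by
    intro z hz h
    have h1 : (a z + c).re = (a z).re + 2*γ := by simp [hc]
    have := hare z hz
    rw [h] at h1
    simp at h1
    linarith
  set ω : ℂ → ℂ := fun z => a z / (a z + c) with hω
  have hωD : DifferentiableOn ℂ ω D := haD.div (haD.add (differentiableOn_const c)) hdenne
  have hω0 : ω 0 = 0 := by simp [hω, ha]
  have hωmaps : MapsTo ω D D := by
    intro z hz
    have hre := hare z hz
    have habs : ‖a z‖ < ‖a z + c‖ := by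
      rw [Complex.norm_def, Complex.norm_def]
      apply Real.sqrt_lt_sqrt (normSq_nonneg _)
      simp [normSq_apply, hc]
      nlinarith [sq_nonneg ((a z).re)]
    rw [hD, mem_ball]
    simp only [dist_zero_right, hω, norm_div]
    exact div_lt_one (lt_of_le_of_lt (norm_nonneg _) habs) |>.mpr habs
  set φ : ℂ → ℂ := dslope ω 0 with hφ
  have hφD : DifferentiableOn ℂ φ D := (differentiableOn_dslope hDnhds).mpr hωD
  have hφle : ∀ z ∈ D, ‖φ z‖ ≤ 1 := by
    intro z hz
    have hmaps : MapsTo ω D (ball (ω 0) 1) := by rw [hω0]; exact hωmaps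
    have := Complex.norm_dslope_le_div_of_mapsTo_ball hωD (hmaps.mono_right ball_subset_closedBall) hz
    simpa using this
  set w₁ : ℂ := φ 0 with hw₁
  set w₂ : ℂ := deriv φ 0 with hw₂
  have hw1le : ‖w₁‖ ≤ 1 := hφle 0 h0D
  -- second coefficient bound
  have hw2le : ‖w₂‖ ≤ 1 - ‖w₁‖^2 := by
    rcases eq_or_lt_of_le hw1le with h1' | hlt
    · -- |w₁| = 1 : maximum modulus, φ is constant
      have hmax : IsMaxOn (norm ∘ φ) D 0 := by
        intro z hz
        simp only [Function.comp_apply]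
        calc ‖φ z‖ ≤ 1 := hφle z hz
          _ = ‖φ 0‖ := by rw [← hw₁, h1']
      have heq := Complex.eqOn_of_isPreconnected_of_isMaxOn_norm
        (convex_ball (0:ℂ) 1).isPreconnected isOpen_ball hφD h0D hmax
      have hev : φ =ᶠ[𝓝 (0:ℂ)] fun _ => φ 0 := Filter.eventuallyEq_of_mem hDnhds heq
      have hw20 : w₂ = 0 := by rw [hw₂, hev.deriv_eq, deriv_const]
      rw [hw20, h1']
      norm_num
    · -- |w₁| < 1 : Möbius transform + Schwarz
      set ψ : ℂ → ℂ := fun z => (φ z - w₁) / (1 - (starRingEnd ℂ) w₁ * φ z) with hψ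
      have hdenψ : ∀ z ∈ D, (1 : ℂ) - (starRingEnd ℂ) w₁ * φ z ≠ 0 := by
        intro z hz h
        have h3 : (1:ℂ) = (starRingEnd ℂ) w₁ * φ z := sub_eq_zero.mp h
        have h2 : ‖(starRingEnd ℂ) w₁ * φ z‖ ≤ ‖w₁‖ := by
          rw [norm_mul, RCLike.norm_conj]
          calc ‖w₁‖ * ‖φ z‖ ≤ ‖w₁‖ * 1 :=
                mul_le_mul_of_nonneg_left (hφle z hz) (norm_nonneg _)
            _ = ‖w₁‖ := mul_one _
        rw [← h3, norm_one] at h2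
        linarith
      have hψD : DifferentiableOn ℂ ψ D := by
        apply DifferentiableOn.div
        · exact hφD.sub (differentiableOn_const _)
        · exact (differentiableOn_const _).sub ((differentiableOn_const _).mul hφD)
        · exact hdenψ
      have hψ0 : ψ 0 = 0 := by
        rw [hψ]; simp only [← hw₁, sub_self, zero_div]
      have hψle : ∀ z ∈ D, ‖ψ z‖ ≤ 1 := by
        intro z hz
        have hφ2 : (φ z).re^2 + (φ z).im^2 ≤ 1 := by
          have h := hφle z hz
          have := Complex.normSq_eq_norm_sq (φ z)
          rw [Complex.normSq_apply] at this
          nlinarith [norm_nonneg (φ z)]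
        have hw2' : w₁.re^2 + w₁.im^2 ≤ 1 := by
          have := Complex.normSq_eq_norm_sq w₁
          rw [Complex.normSq_apply] at this
          nlinarith [norm_nonneg w₁]
        have key : ‖φ z - w₁‖^2 ≤ ‖(1:ℂ) - (starRingEnd ℂ) w₁ * φ z‖^2 := by
          have e : ∀ x : ℂ, ‖x‖^2 = Complex.normSq x := fun x => by
            rw [Complex.sq_norm]
          rw [e, e]
          simp only [Complex.normSq_apply, Complex.sub_re, Complex.sub_im, Complex.mul_re,
            Complex.mul_im, Complex.one_re, Complex.one_im, Complex.conj_re, Complex.conj_im]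
          nlinarith [mul_nonneg (sub_nonneg.2 hφ2) (sub_nonneg.2 hw2')]
        have hnm : ‖φ z - w₁‖ ≤ ‖(1:ℂ) - (starRingEnd ℂ) w₁ * φ z‖ := by
          nlinarith [norm_nonneg (φ z - w₁), norm_nonneg ((1:ℂ) - (starRingEnd ℂ) w₁ * φ z)]
        rw [hψ]
        simp only [norm_div]
        exact div_le_one_of_le₀ hnm (norm_nonneg _)
      have hd1 : ‖deriv ψ 0‖ ≤ 1 := by
        refine le_of_forall_gt_imp_ge_of_dense fun R hR => ?_
        have hmaps : MapsTo ψ D (ball (ψ 0) R) := by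
          intro z hz
          rw [hψ0, mem_ball, dist_zero_right]
          exact lt_of_le_of_lt (hψle z hz) hR
        have h := Complex.norm_dslope_le_div_of_mapsTo_ball hψD (hmaps.mono_right ball_subset_closedBall) h0D
        rw [dslope_same] at h
        simpa using h
      have hdφ0 : DifferentiableAt ℂ φ 0 := hφD.differentiableAt hDnhds
      have hnum : DifferentiableAt ℂ (fun z => φ z - w₁) 0 :=
        hdφ0.sub (differentiableAt_const _)
      have hdend : DifferentiableAt ℂ (fun z => (1:ℂ) - (starRingEnd ℂ) w₁ * φ z) 0 :=
        (differentiableAt_const _).sub ((differentiableAt_const _).mul hdφ0)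
      have hden0 : (1:ℂ) - (starRingEnd ℂ) w₁ * φ 0 ≠ 0 := hdenψ 0 h0D
      have hcc0 : (1:ℂ) - (starRingEnd ℂ) w₁ * w₁ ≠ 0 := by rw [hw₁]; exact hden0
      have hderψ : deriv ψ 0 = w₂ / (1 - (starRingEnd ℂ) w₁ * w₁) := by
        rw [hψ]
        rw [deriv_fun_div hnum hdend hden0, deriv_sub_const, ← hw₁, sub_self, zero_mul, sub_zero]
        rw [← hw₂]
        field_simp
      have hcc : (1:ℂ) - (starRingEnd ℂ) w₁ * w₁ = ((1 - ‖w₁‖^2 : ℝ) : ℂ) := by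
        rw [mul_comm, Complex.mul_conj]
        rw [Complex.normSq_eq_norm_sq]
        push_cast
        ring
      rw [hderψ, hcc] at hd1
      rw [norm_div] at hd1
      have hpos : (0:ℝ) < 1 - ‖w₁‖^2 := by nlinarith [norm_nonneg w₁]
      have hnr : ‖((1 - ‖w₁‖^2 : ℝ) : ℂ)‖ = 1 - ‖w₁‖^2 := by
        rw [Complex.norm_real]
        exact abs_of_pos hpos
      rw [hnr] at hd1
      exact (div_le_one hpos).mp hd1
  -- key identity
  have hI' : ∀ z ∈ D, z ≠ 0 → deriv u z = φ z * (z * deriv u z + c * u z) := by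
    intro z hz hzne
    have hφz : φ z = ω z / z := by
      rw [hφ, dslope_of_ne _ hzne, slope_def_field, hω0, sub_zero, sub_zero]
    have hu'' : a z * u z = z * deriv u z := by
      exact div_mul_cancel₀ _ (hune z hz)
    have hAc := hdenne z hz
    refine (?_ : φ z * (z * deriv u z + c * u z) = deriv u z).symm
    rw [hφz]
    have h2 : ω z = a z / (a z + c) := rfl
    rw [h2, div_div, div_mul_eq_mul_div, div_eq_iff (mul_ne_zero hAc hzne)]
    linear_combination c * hu''
  have hI : ∀ z ∈ D, deriv u z = φ z * (z * deriv u z + c * u z) := by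
    intro z hz
    rcases eq_or_ne z 0 with rfl | hzne
    · -- continuity argument at 0
      have hL : Filter.Tendsto (deriv u) (𝓝[≠] (0:ℂ)) (𝓝 (deriv u 0)) :=
        ((hu'a 0 h0D).continuousAt.continuousWithinAt).tendsto
      have hRc : ContinuousAt (fun z => φ z * (z * deriv u z + c * u z)) 0 := by
        have hφc : ContinuousAt φ 0 := (hφD.differentiableAt hDnhds).continuousAt
        have hu'c : ContinuousAt (deriv u) 0 := (hu'a 0 h0D).continuousAt
        have huc : ContinuousAt u 0 := (huD.differentiableAt hDnhds).continuousAt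
        exact hφc.mul ((continuousAt_id.mul hu'c).add (continuousAt_const.mul huc))
      have hR : Filter.Tendsto (fun z => φ z * (z * deriv u z + c * u z)) (𝓝[≠] (0:ℂ))
          (𝓝 (φ 0 * (0 * deriv u 0 + c * u 0))) := hRc.continuousWithinAt.tendsto
      have hev : deriv u =ᶠ[𝓝[≠] (0:ℂ)] fun z => φ z * (z * deriv u z + c * u z) := by
        filter_upwards [mem_nhdsWithin_of_mem_nhds hDnhds, self_mem_nhdsWithin] with z hzD hzne
        exact hI' z hzD hzne
      exact tendsto_nhds_unique (hL.congr' hev) hR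
    · exact hI' z hz hzne
  -- coefficient relations
  obtain ⟨p, hp⟩ := (hg.analyticOnNhd isOpen_ball) 0 h0D
  have hu_series : HasFPowerSeriesAt u p.fslope 0 := hp.has_fpower_series_dslope_fslope
  set b₂ : ℂ := p.coeff 2 with hb₂
  set b₃ : ℂ := p.coeff 3 with hb₃
  have hg2 : iteratedDeriv 2 g 0 = 2 * b₂ := by
    rw [coeff_from_series hp 2]; norm_num; rfl
  have hg3 : iteratedDeriv 3 g 0 = 6 * b₃ := by
    rw [coeff_from_series hp 3]; norm_num [Nat.factorial]; rfl
  have hu1 : deriv u 0 = b₂ := by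
    have := coeff_from_series hu_series 1
    rw [← iteratedDeriv_one, this, FormalMultilinearSeries.coeff_fslope]
    norm_num; rfl
  have hu2 : deriv (deriv u) 0 = 2 * b₃ := by
    have h2 := coeff_from_series hu_series 2
    have h21 : iteratedDeriv 2 u = deriv (deriv u) := by
      rw [iteratedDeriv_succ, iteratedDeriv_one]
    rw [← h21, h2, FormalMultilinearSeries.coeff_fslope]
    norm_num [Nat.factorial]; rfl
  have hE1 : b₂ = 2 * γ * w₁ := by
    have h := hI 0 h0D
    rw [hu1, hu0] at h
    simp only [zero_mul, mul_one, zero_add] at h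
    rw [h, hc]
    push_cast
    ring
  have hE2 : b₃ = γ * w₂ + γ * (1 + 2*γ) * w₁^2 := by
    have hdφ0 : DifferentiableAt ℂ φ 0 := hφD.differentiableAt hDnhds
    have hdu'0 : DifferentiableAt ℂ (deriv u) 0 := (hu'a 0 h0D).differentiableAt
    have hdu0 : DifferentiableAt ℂ u 0 := huD.differentiableAt hDnhds
    have hev : deriv u =ᶠ[𝓝 (0:ℂ)] fun z => φ z * (z * deriv u z + c * u z) :=
      Filter.eventuallyEq_of_mem hDnhds hI
    have hder := hev.deriv_eq
    have hinner : DifferentiableAt ℂ (fun z => z * deriv u z + c * u z) 0 :=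
      (differentiableAt_fun_id.mul hdu'0).add (hdu0.const_mul c)
    rw [hu2, deriv_fun_mul hdφ0 hinner,
      deriv_fun_add (f := fun z => z * deriv u z) (differentiableAt_fun_id.mul hdu'0) (hdu0.const_mul c),
      deriv_fun_mul differentiableAt_fun_id hdu'0, deriv_const_mul c hdu0, deriv_id'',
      hu0, hu1] at hder
    rw [hc] at hder
    push_cast at hder ⊢
    linear_combination hder/2 + ((1 + 2*(γ:ℂ)) * w₁ / 2) * hE1
  -- final estimate
  have hb2' : iteratedDeriv 2 g 0 / 2 = b₂ := by rw [hg2]; ring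
  have hb3' : iteratedDeriv 3 g 0 / 6 = b₃ := by rw [hg3]; ring
  rw [hb2', hb3']
  have hXeq : 2*b₂^2*b₃ - b₃^2 - 2*b₂^2 + 1
      = ((-(γ^2):ℝ):ℂ) * w₂^2 + ((2*γ^2*(2*γ-1):ℝ):ℂ) * (w₁^2*w₂)
        + ((γ^2*(1+2*γ)*(6*γ-1):ℝ):ℂ) * w₁^4 + ((-(8*γ^2):ℝ):ℂ) * w₁^2 + 1 := by
    rw [hE1, hE2]; push_cast; ring
  rw [hXeq]
  set t : ℝ := ‖w₁‖ with ht
  set s : ℝ := ‖w₂‖ with hsdef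
  have ht0 : 0 ≤ t := norm_nonneg _
  have hs0 : 0 ≤ s := norm_nonneg _
  have c6 : (0:ℝ) ≤ γ^2*(1+2*γ)*(6*γ-1) :=
    mul_nonneg (mul_nonneg (sq_nonneg γ) (by linarith)) (by linarith)
  have e1 : ‖((-(γ^2):ℝ):ℂ) * w₂^2‖ = γ^2 * s^2 := by
    rw [norm_mul, Complex.norm_real, Real.norm_eq_abs, norm_pow, abs_neg, _root_.abs_of_nonneg (sq_nonneg γ)]
  have e2 : ‖((2*γ^2*(2*γ-1):ℝ):ℂ) * (w₁^2*w₂)‖ = 2*γ^2*|2*γ-1| * (t^2*s) := by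
    rw [norm_mul, Complex.norm_real, Real.norm_eq_abs, norm_mul, norm_pow, abs_mul,
      _root_.abs_of_nonneg (by positivity : (0:ℝ) ≤ 2*γ^2)]
  have e3 : ‖((γ^2*(1+2*γ)*(6*γ-1):ℝ):ℂ) * w₁^4‖ = γ^2*(1+2*γ)*(6*γ-1) * t^4 := by
    rw [norm_mul, Complex.norm_real, Real.norm_eq_abs, norm_pow, _root_.abs_of_nonneg c6]
  have e4 : ‖((-(8*γ^2):ℝ):ℂ) * w₁^2‖ = 8*γ^2 * t^2 := by
    rw [norm_mul, Complex.norm_real, Real.norm_eq_abs, norm_pow, abs_neg,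
      _root_.abs_of_nonneg (by positivity : (0:ℝ) ≤ 8*γ^2)]
  have hbound : ‖((-(γ^2):ℝ):ℂ) * w₂^2 + ((2*γ^2*(2*γ-1):ℝ):ℂ) * (w₁^2*w₂)
        + ((γ^2*(1+2*γ)*(6*γ-1):ℝ):ℂ) * w₁^4 + ((-(8*γ^2):ℝ):ℂ) * w₁^2 + 1‖
      ≤ γ^2*s^2 + 2*γ^2*|2*γ-1| * (t^2*s) + γ^2*(1+2*γ)*(6*γ-1)*t^4 + 8*γ^2*t^2 + 1 := by
    refine le_trans (norm_add_le _ _) ?_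
    rw [norm_one]
    refine le_trans (add_le_add_left (norm_add_le _ _) 1) ?_
    refine le_trans (add_le_add_left (add_le_add_left (norm_add_le _ _) _) 1) ?_
    refine le_trans (add_le_add_left (add_le_add_left
      (add_le_add_left (norm_add_le _ _) _) _) 1) ?_
    rw [e1, e2, e3, e4]
  refine le_trans hbound ?_
  have ht1 : t ≤ 1 := hw1le
  have hx1 : t^2 ≤ 1 := by nlinarith [ht0, ht1]
  have hfin := real_est γ (t^2) s (|2*γ-1|) hγ3 hγ1 (sq_nonneg t) hx1 hs0 hw2le rfl
  calc γ^2*s^2 + 2*γ^2*|2*γ-1| * (t^2*s) + γ^2*(1+2*γ)*(6*γ-1)*t^4 + 8*γ^2*t^2 + 1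
      = γ^2*s^2 + 2*γ^2*(|2*γ-1|)*(t^2)*s + γ^2*(1+2*γ)*(6*γ-1)*(t^2)^2 + 8*γ^2*(t^2) + 1 := by
        ring
    _ ≤ 12*γ^4+4*γ^3+7*γ^2+1 := hfin
    _ = 12*α^4 - 52*α^3 + 91*α^2 - 74*α + 24 := by rw [hγdef]; ring
end

section
/- Fix β with 1/3 ≤ β ≤ 1. If g is analytic and univalent on the unit disk with g(0)=0, g'(0)=1, and |arg(z g'(z)/g(z))| < πβ/2 for all nonzero z in the unit disk, and g(z) = z + b₂z² + b₃z³ + ..., then |2b₂²b₃ − b₃² − 2b₂² + 1| ≤ 15β⁴ + 8β² + 1. -/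
open Complex Metric Set Real

private lemma memB : (0:ℂ) ∈ Metric.ball (0:ℂ) 1 := Metric.mem_ball_self one_pos

private lemma derivB {f : ℂ → ℂ} (hf : DifferentiableOn ℂ f (Metric.ball (0:ℂ) 1)) :
    DifferentiableOn ℂ (deriv f) (Metric.ball (0:ℂ) 1) :=
  ((hf.analyticOnNhd Metric.isOpen_ball).deriv).differentiableOn

private lemma datB {f : ℂ → ℂ} (hf : DifferentiableOn ℂ f (Metric.ball (0:ℂ) 1)) {z : ℂ}
    (hz : z ∈ Metric.ball (0:ℂ) 1) : DifferentiableAt ℂ f z :=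
  (hf z hz).differentiableAt (Metric.isOpen_ball.mem_nhds hz)

private lemma eqOn_derivB {f₁ f₂ : ℂ → ℂ} (h : Set.EqOn f₁ f₂ (Metric.ball (0:ℂ) 1)) :
    Set.EqOn (deriv f₁) (deriv f₂) (Metric.ball (0:ℂ) 1) := fun z hz =>
  (h.eventuallyEq_of_mem (Metric.isOpen_ball.mem_nhds hz)).deriv_eq

private lemma id2 (f : ℂ → ℂ) : iteratedDeriv 2 f = deriv (deriv f) := by
  funext z; rw [show (2:ℕ) = 1+1 from rfl, iteratedDeriv_succ, iteratedDeriv_one]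

private lemma id3 (f : ℂ → ℂ) : iteratedDeriv 3 f = deriv (deriv (deriv f)) := by
  funext z; rw [show (3:ℕ) = 2+1 from rfl, iteratedDeriv_succ, id2]

private lemma deriv_mulB {f k : ℂ → ℂ} (hf : DifferentiableOn ℂ f (Metric.ball (0:ℂ) 1))
    (hk : DifferentiableOn ℂ k (Metric.ball (0:ℂ) 1)) :
    Set.EqOn (deriv (fun z => f z * k z)) (fun z => deriv f z * k z + f z * deriv k z)
      (Metric.ball (0:ℂ) 1) :=
  fun _ hz => deriv_fun_mul (datB hf hz) (datB hk hz)

private lemma iteratedDeriv2_mulB {f k : ℂ → ℂ} (hf : DifferentiableOn ℂ f (Metric.ball (0:ℂ) 1))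
    (hk : DifferentiableOn ℂ k (Metric.ball (0:ℂ) 1)) :
    iteratedDeriv 2 (fun z => f z * k z) 0 =
      iteratedDeriv 2 f 0 * k 0 + 2 * (deriv f 0 * deriv k 0) + f 0 * iteratedDeriv 2 k 0 := by
  have h2 : deriv (deriv (fun z => f z * k z)) 0
      = deriv (fun z => deriv f z * k z + f z * deriv k z) 0 := eqOn_derivB (deriv_mulB hf hk) memB
  rw [id2, id2, id2, h2,
    deriv_fun_add ((datB (derivB hf) memB).fun_mul (datB hk memB))
      ((datB hf memB).fun_mul (datB (derivB hk) memB)),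
    deriv_fun_mul (datB (derivB hf) memB) (datB hk memB),
    deriv_fun_mul (datB hf memB) (datB (derivB hk) memB)]
  ring

private lemma iteratedDeriv3_mulB {f k : ℂ → ℂ} (hf : DifferentiableOn ℂ f (Metric.ball (0:ℂ) 1))
    (hk : DifferentiableOn ℂ k (Metric.ball (0:ℂ) 1)) :
    iteratedDeriv 3 (fun z => f z * k z) 0 =
      iteratedDeriv 3 f 0 * k 0 + 3 * (iteratedDeriv 2 f 0 * deriv k 0)
        + 3 * (deriv f 0 * iteratedDeriv 2 k 0) + f 0 * iteratedDeriv 3 k 0 := by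
  have e2 : Set.EqOn (deriv (fun z => deriv f z * k z + f z * deriv k z))
      (fun z => deriv (deriv f) z * k z + 2 * (deriv f z * deriv k z) + f z * deriv (deriv k) z)
      (Metric.ball (0:ℂ) 1) := by
    intro z hz
    rw [deriv_fun_add ((datB (derivB hf) hz).fun_mul (datB hk hz)) ((datB hf hz).fun_mul (datB (derivB hk) hz)),
      deriv_fun_mul (datB (derivB hf) hz) (datB hk hz), deriv_fun_mul (datB hf hz) (datB (derivB hk) hz)]
    ring
  have h2 : Set.EqOn (deriv (deriv (fun z => f z * k z)))
      (fun z => deriv (deriv f) z * k z + 2 * (deriv f z * deriv k z) + f z * deriv (deriv k) z)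
      (Metric.ball (0:ℂ) 1) := (eqOn_derivB (deriv_mulB hf hk)).trans e2
  have h3 : deriv (deriv (deriv (fun z => f z * k z))) 0
      = deriv (fun z => deriv (deriv f) z * k z + 2 * (deriv f z * deriv k z)
          + f z * deriv (deriv k) z) 0 := eqOn_derivB h2 memB
  have h4 : deriv (fun z => deriv (deriv f) z * k z + 2 * (deriv f z * deriv k z)
          + f z * deriv (deriv k) z) 0
      = deriv (deriv (deriv f)) 0 * k 0 + deriv (deriv f) 0 * deriv k 0
        + 2 * (deriv (deriv f) 0 * deriv k 0 + deriv f 0 * deriv (deriv k) 0)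
        + (deriv f 0 * deriv (deriv k) 0 + f 0 * deriv (deriv (deriv k)) 0) := by
    rw [deriv_fun_add (((datB (derivB (derivB hf)) memB).fun_mul (datB hk memB)).fun_add
          ((differentiableAt_const _).fun_mul ((datB (derivB hf) memB).fun_mul (datB (derivB hk) memB))))
        ((datB hf memB).fun_mul (datB (derivB (derivB hk)) memB)),
      deriv_fun_add ((datB (derivB (derivB hf)) memB).fun_mul (datB hk memB))
        ((differentiableAt_const _).fun_mul ((datB (derivB hf) memB).fun_mul (datB (derivB hk) memB))),
      deriv_fun_mul (datB (derivB (derivB hf)) memB) (datB hk memB),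
      deriv_const_mul _ ((datB (derivB hf) memB).fun_mul (datB (derivB hk) memB)),
      deriv_fun_mul (datB (derivB hf) memB) (datB (derivB hk) memB),
      deriv_fun_mul (datB hf memB) (datB (derivB (derivB hk)) memB)]
  simp only [id2, id3]
  rw [h3, h4]
  ring

private lemma iteratedDeriv2_congrB {f₁ f₂ : ℂ → ℂ}
    (h : Set.EqOn f₁ f₂ (Metric.ball (0:ℂ) 1)) : iteratedDeriv 2 f₁ 0 = iteratedDeriv 2 f₂ 0 := by
  simp only [id2]; exact eqOn_derivB (eqOn_derivB h) memB

private lemma iteratedDeriv3_congrB {f₁ f₂ : ℂ → ℂ}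
    (h : Set.EqOn f₁ f₂ (Metric.ball (0:ℂ) 1)) : iteratedDeriv 3 f₁ 0 = iteratedDeriv 3 f₂ 0 := by
  simp only [id3]; exact eqOn_derivB (eqOn_derivB (eqOn_derivB h)) memB

private lemma deriv_congrB {f₁ f₂ : ℂ → ℂ}
    (h : Set.EqOn f₁ f₂ (Metric.ball (0:ℂ) 1)) : deriv f₁ 0 = deriv f₂ 0 :=
  eqOn_derivB h memB

private lemma schwarz_pick_center {χ : ℂ → ℂ}
    (hχ : DifferentiableOn ℂ χ (Metric.ball (0:ℂ) 1))
    (hb : ∀ z ∈ Metric.ball (0:ℂ) 1, ‖χ z‖ ≤ 1) :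
    ‖deriv χ 0‖ ≤ 1 - ‖χ 0‖ ^ 2 := by
  by_cases hc : ∃ z₀ ∈ Metric.ball (0:ℂ) 1, ‖χ z₀‖ = 1
  · obtain ⟨z₀, hz₀, hz1⟩ := hc
    have hmax : IsMaxOn (norm ∘ χ) (Metric.ball (0:ℂ) 1) z₀ := by
      intro z hz
      simp only [Function.comp_apply, hz1]
      exact hb z hz
    have heq := Complex.eqOn_of_isPreconnected_of_isMaxOn_norm
      (convex_ball (0:ℂ) 1).isPreconnected Metric.isOpen_ball hχ hz₀ hmax
    have h00 : χ 0 = χ z₀ := heq memB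
    have hder : deriv χ 0 = 0 := by
      have : deriv χ 0 = deriv (Function.const ℂ (χ z₀)) 0 :=
        (heq.eventuallyEq_of_mem (Metric.isOpen_ball.mem_nhds memB)).deriv_eq
      rw [this, show Function.const ℂ (χ z₀) = fun _ => χ z₀ from rfl, deriv_const]
    rw [hder, h00, hz1]
    simp
  · push_neg at hc
    have hlt : ∀ z ∈ Metric.ball (0:ℂ) 1, ‖χ z‖ < 1 :=
      fun z hz => lt_of_le_of_ne (hb z hz) (hc z hz)
    set a := χ 0 with ha_def
    have ha : ‖a‖ < 1 := hlt 0 memB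
    have hden : ∀ z ∈ Metric.ball (0:ℂ) 1, (1 : ℂ) - (starRingEnd ℂ) a * χ z ≠ 0 := by
      intro z hz h
      have : ‖(starRingEnd ℂ) a * χ z‖ < 1 := by
        rw [norm_mul, Complex.norm_conj]
        calc ‖a‖ * ‖χ z‖ ≤ ‖a‖ * 1 :=
              mul_le_mul_of_nonneg_left (hb z hz) (norm_nonneg a)
          _ < 1 := by simpa using ha
      rw [sub_eq_zero] at h
      rw [← h] at this
      simp at this
    set ρ : ℂ → ℂ := fun z => (χ z - a) / (1 - (starRingEnd ℂ) a * χ z) with hρ_def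
    have hρd : DifferentiableOn ℂ ρ (Metric.ball (0:ℂ) 1) :=
      (hχ.sub (differentiableOn_const a)).div
        ((differentiableOn_const 1).sub ((differentiableOn_const _).mul hχ)) hden
    have hρ0 : ρ 0 = 0 := by simp [hρ_def, ha_def]
    have hmaps : Set.MapsTo ρ (Metric.ball (0:ℂ) 1) (Metric.ball (ρ 0) 1) := by
      rw [hρ0]
      intro z hz
      have h1 : ‖χ z - a‖ < ‖1 - (starRingEnd ℂ) a * χ z‖ := by
        have e1 : Complex.normSq (1 - (starRingEnd ℂ) a * χ z) - Complex.normSq (χ z - a)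
            = (1 - Complex.normSq a) * (1 - Complex.normSq (χ z)) := by
          simp only [Complex.normSq_apply, Complex.sub_re, Complex.sub_im, Complex.mul_re,
            Complex.mul_im, Complex.one_re, Complex.one_im, Complex.conj_re, Complex.conj_im]
          ring
        have h2 : 0 < (1 - Complex.normSq a) * (1 - Complex.normSq (χ z)) := by
          apply mul_pos
          · rw [← Complex.sq_norm]; nlinarith [norm_nonneg a]
          · rw [← Complex.sq_norm]; nlinarith [norm_nonneg (χ z), hlt z hz]
        have h3 : Complex.normSq (χ z - a) < Complex.normSq (1 - (starRingEnd ℂ) a * χ z) := by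
          linarith
        rw [← Complex.sq_norm, ← Complex.sq_norm] at h3
        exact lt_of_pow_lt_pow_left₀ 2 (norm_nonneg _) h3
      rw [Metric.mem_ball, dist_zero_right, hρ_def]
      rw [norm_div]
      exact (div_lt_one (lt_of_le_of_lt (norm_nonneg _) h1)).mpr h1
    have hschwarz : ‖deriv ρ 0‖ ≤ 1 :=
      le_of_le_of_eq (Complex.norm_deriv_le_div_of_mapsTo_ball hρd (hmaps.mono_right Metric.ball_subset_closedBall) one_pos) (by norm_num)
    have hconj : (starRingEnd ℂ) a * a = (Complex.normSq a : ℂ) := by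
      rw [mul_comm, Complex.mul_conj]
    have hdenne : (1 : ℂ) - (starRingEnd ℂ) a * a ≠ 0 := hden 0 memB
    have hderρ : deriv ρ 0 = deriv χ 0 / (1 - (starRingEnd ℂ) a * a) := by
      have hnum : DifferentiableAt ℂ (fun z => χ z - a) 0 := (datB hχ memB).sub_const a
      have hden' : DifferentiableAt ℂ (fun z => (1:ℂ) - (starRingEnd ℂ) a * χ z) 0 :=
        (differentiableAt_const 1).sub ((differentiableAt_const _).mul (datB hχ memB))
      rw [hρ_def]
      rw [deriv_fun_div hnum hden' (hden 0 memB)]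
      rw [deriv_sub_const, deriv_const_sub, deriv_const_mul _ (datB hχ memB)]
      have : χ 0 - a = 0 := by rw [← ha_def]; ring
      rw [this, ← ha_def]
      field_simp
      ring
    have habs : ‖deriv ρ 0‖
        = ‖deriv χ 0‖ / (1 - ‖a‖ ^ 2) := by
      rw [hderρ, norm_div, hconj]
      congr 1
      rw [show (1:ℂ) - (Complex.normSq a : ℂ) = ((1 - Complex.normSq a : ℝ) : ℂ) by push_cast; ring]
      rw [Complex.norm_real, Real.norm_eq_abs, abs_of_pos (by rw [← Complex.sq_norm]; nlinarith [norm_nonneg a]),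
        Complex.sq_norm]
    rw [habs] at hschwarz
    have hpos : 0 < 1 - ‖a‖ ^ 2 := by nlinarith [norm_nonneg a]
    calc ‖deriv χ 0‖
        = ‖deriv χ 0‖ / (1 - ‖a‖ ^ 2) * (1 - ‖a‖ ^ 2) := by
          field_simp
      _ ≤ 1 * (1 - ‖a‖ ^ 2) := mul_le_mul_of_nonneg_right hschwarz hpos.le
      _ = 1 - ‖χ 0‖ ^ 2 := by rw [one_mul, ha_def]

private lemma id2_id : iteratedDeriv 2 (fun z : ℂ => z) 0 = 0 := by
  simp [id2]

private lemma schwarz_coeff {ψ : ℂ → ℂ} (hψ : DifferentiableOn ℂ ψ (Metric.ball (0:ℂ) 1))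
    (hm : Set.MapsTo ψ (Metric.ball (0:ℂ) 1) (Metric.ball (0:ℂ) 1)) (hψ0 : ψ 0 = 0) :
    ‖deriv ψ 0‖ ≤ 1 ∧
      ‖iteratedDeriv 2 ψ 0‖ ≤ 2 * (1 - ‖deriv ψ 0‖ ^ 2) := by
  have hm' : Set.MapsTo ψ (Metric.ball (0:ℂ) 1) (Metric.ball (ψ 0) 1) := by rwa [hψ0]
  have hd1 : ‖deriv ψ 0‖ ≤ 1 :=
    le_of_le_of_eq (Complex.norm_deriv_le_div_of_mapsTo_ball hψ (hm'.mono_right Metric.ball_subset_closedBall) one_pos) (by norm_num)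
  set χ : ℂ → ℂ := dslope ψ 0 with hχ_def
  have hχd : DifferentiableOn ℂ χ (Metric.ball (0:ℂ) 1) :=
    (differentiableOn_dslope (Metric.isOpen_ball.mem_nhds memB)).mpr hψ
  have hχ0 : χ 0 = deriv ψ 0 := dslope_same ψ 0
  have hb : ∀ z ∈ Metric.ball (0:ℂ) 1, ‖χ z‖ ≤ 1 := by
    intro z hz
    rcases eq_or_ne z 0 with rfl | hne
    · rw [hχ0]; exact hd1
    · have := Complex.norm_dslope_le_div_of_mapsTo_ball hψ (hm'.mono_right Metric.ball_subset_closedBall) hz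
      exact le_of_le_of_eq this (by norm_num)
  have hpick := schwarz_pick_center hχd hb
  rw [hχ0] at hpick
  have heq : Set.EqOn ψ (fun z => z * χ z) (Metric.ball (0:ℂ) 1) := by
    intro z _
    rcases eq_or_ne z 0 with rfl | hne
    · simp [hψ0]
    · show ψ z = z * dslope ψ 0 z
      rw [dslope_of_ne ψ hne, slope_def_field, hψ0]
      field_simp
      ring
  have h2 : iteratedDeriv 2 ψ 0 = 2 * deriv χ 0 := by
    rw [iteratedDeriv2_congrB heq, iteratedDeriv2_mulB (f := fun z => z) differentiableOn_id hχd]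
    simp [id2_id, deriv_id'']
  refine ⟨hd1, ?_⟩
  rw [h2, norm_mul]
  simp only [Complex.norm_two]
  exact mul_le_mul_of_nonneg_left hpick (by norm_num)

private lemma exp_comp_derivs {L : ℂ → ℂ} (hL : DifferentiableOn ℂ L (Metric.ball (0:ℂ) 1))
    (hL0 : L 0 = 0) (a : ℂ) :
    deriv (fun z => Complex.exp (a * L z)) 0 = a * deriv L 0 ∧
      iteratedDeriv 2 (fun z => Complex.exp (a * L z)) 0
        = a * iteratedDeriv 2 L 0 + a ^ 2 * (deriv L 0) ^ 2 := by
  have hE : DifferentiableOn ℂ (fun z => Complex.exp (a * L z)) (Metric.ball (0:ℂ) 1) :=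
    fun z hz => (((datB hL hz).const_mul a).cexp).differentiableWithinAt
  have e1 : Set.EqOn (deriv (fun z => Complex.exp (a * L z)))
      (fun z => Complex.exp (a * L z) * (a * deriv L z)) (Metric.ball (0:ℂ) 1) := by
    intro z hz
    rw [deriv_cexp ((datB hL hz).const_mul a), deriv_const_mul a (datB hL hz)]
  have d1 : deriv (fun z => Complex.exp (a * L z)) 0 = a * deriv L 0 := by
    rw [e1 memB]
    simp [hL0]
  refine ⟨d1, ?_⟩
  have h2 : deriv (deriv (fun z => Complex.exp (a * L z))) 0
      = deriv (fun z => Complex.exp (a * L z) * (a * deriv L z)) 0 := eqOn_derivB e1 memB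
  rw [id2, h2, deriv_fun_mul ((datB hL memB).const_mul a).cexp ((datB (derivB hL) memB).const_mul a),
    deriv_cexp ((datB hL memB).const_mul a), deriv_const_mul a (datB hL memB),
    deriv_const_mul a (datB (derivB hL) memB)]
  simp only [hL0, mul_zero, Complex.exp_zero, one_mul, ← id2 L]
  ring
private lemma final_bound {β x y : ℝ} (hβ : 1/3 ≤ β) (hx0 : 0 ≤ x) (hy0 : 0 ≤ y)
    (hxb : x ≤ 2*β) (hyb : β*y ≤ 4*β^2 - x^2) :
    y/4 + 3*x^2/4 ≤ 3*β^2 ∧ y/4 + 5*x^2/4 ≤ 5*β^2 := by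
  have hβpos : 0 < β := by linarith
  have hx2 : x^2 ≤ 4*β^2 := by nlinarith
  constructor
  · have hkey : (0:ℝ) ≤ (4*β^2 - x^2) * (3*β - 1) :=
      mul_nonneg (by linarith) (by linarith)
    have t2' : β * (y/4 + 3*x^2/4) ≤ β * (3*β^2) := by nlinarith
    exact (mul_le_mul_iff_right₀ hβpos).mp t2'
  · have hkey : (0:ℝ) ≤ (4*β^2 - x^2) * (5*β - 1) :=
      mul_nonneg (by linarith) (by linarith)
    have t2' : β * (y/4 + 5*x^2/4) ≤ β * (5*β^2) := by nlinarith
    exact (mul_le_mul_iff_right₀ hβpos).mp t2'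

theorem toeplitz_T31_strongly_starlike (β : ℝ) (hβ0 : 1/3 ≤ β) (hβ1 : β ≤ 1)
    (g : ℂ → ℂ)
    (hg : DifferentiableOn ℂ g (ball (0:ℂ) 1))
    (hinj : Set.InjOn g (ball (0:ℂ) 1))
    (h0 : g 0 = 0) (h1 : deriv g 0 = 1)
    (hst : ∀ z ∈ ball (0:ℂ) 1, z ≠ 0 →
      |Complex.arg (z * deriv g z / g z)| < Real.pi * β / 2) :
    ‖2 * (iteratedDeriv 2 g 0 / 2) ^ 2 * (iteratedDeriv 3 g 0 / 6)
      - (iteratedDeriv 3 g 0 / 6) ^ 2 - 2 * (iteratedDeriv 2 g 0 / 2) ^ 2 + 1‖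
      ≤ 15 * β ^ 4 + 8 * β ^ 2 + 1 := by
  have hβpos : 0 < β := lt_of_lt_of_le (by norm_num) hβ0
  -- Step 1 : u = dslope g 0
  set u : ℂ → ℂ := dslope g 0 with hu_def
  have hud : DifferentiableOn ℂ u (ball (0:ℂ) 1) :=
    (differentiableOn_dslope (Metric.isOpen_ball.mem_nhds memB)).mpr hg
  have hu0 : u 0 = 1 := by rw [hu_def, dslope_same, h1]
  have hgz : ∀ z ∈ ball (0:ℂ) 1, g z = z * u z := by
    intro z _
    rcases eq_or_ne z 0 with rfl | hne
    · simp [h0]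
    · rw [hu_def, dslope_of_ne g hne, slope_def_field, h0]
      field_simp
      ring
  have hgne : ∀ z ∈ ball (0:ℂ) 1, z ≠ 0 → g z ≠ 0 := by
    intro z hz hne hzero
    exact hne (hinj hz memB (by rw [hzero, h0]))
  have hune : ∀ z ∈ ball (0:ℂ) 1, u z ≠ 0 := by
    intro z hz
    rcases eq_or_ne z 0 with rfl | hne
    · rw [hu0]; exact one_ne_zero
    · intro hzero
      exact hgne z hz hne (by rw [hgz z hz, hzero, mul_zero])
  -- Step 2 : φ
  set φ : ℂ → ℂ := fun z => deriv g z / u z with hφ_def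
  have hφd : DifferentiableOn ℂ φ (ball (0:ℂ) 1) := (derivB hg).div hud hune
  have hφ0 : φ 0 = 1 := by rw [hφ_def]; simp [h1, hu0]
  have hφeq : ∀ z ∈ ball (0:ℂ) 1, z ≠ 0 → φ z = z * deriv g z / g z := by
    intro z hz hne
    rw [hφ_def, hgz z hz]
    have hu' := hune z hz
    field_simp
  have harg : ∀ z ∈ ball (0:ℂ) 1, |Complex.arg (φ z)| < Real.pi * β / 2 := by
    intro z hz
    rcases eq_or_ne z 0 with rfl | hne
    · rw [hφ0, Complex.arg_one, abs_zero]
      positivity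
    · rw [hφeq z hz hne]
      exact hst z hz hne
  have hφne : ∀ z ∈ ball (0:ℂ) 1, φ z ≠ 0 := by
    have hφana : AnalyticOnNhd ℂ φ (ball (0:ℂ) 1) := hφd.analyticOnNhd Metric.isOpen_ball
    rcases hφana.is_constant_or_isOpen (convex_ball (0:ℂ) 1).isPreconnected with ⟨w, hw⟩ | hopen
    · intro z hz
      rw [hw z hz, ← hw 0 memB, hφ0]
      exact one_ne_zero
    · intro z hz hzero
      have hz0 : z ≠ 0 := by
        intro h; rw [h, hφ0] at hzero; exact one_ne_zero hzero
      have hzlt : ‖z‖ < 1 := by simpa [Metric.mem_ball] using hz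
      have habs0 : 0 < ‖z‖ := by
        simpa [norm_pos_iff] using hz0
      set r : ℝ := min (‖z‖) (1 - ‖z‖) with hr_def
      have hrpos : 0 < r := lt_min habs0 (by linarith)
      have hsub : ball z r ⊆ ball (0:ℂ) 1 := by
        intro w hw
        rw [Metric.mem_ball] at hw ⊢
        calc dist w 0 ≤ dist w z + dist z 0 := dist_triangle _ _ _
          _ < r + ‖z‖ := by
              rw [dist_zero_right]
              exact add_lt_add_of_lt_of_le hw le_rfl
          _ ≤ (1 - ‖z‖) + ‖z‖ := by
              exact add_le_add (min_le_right _ _) le_rfl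
          _ = 1 := by ring
      have hopen' : IsOpen (φ '' ball z r) := hopen _ hsub Metric.isOpen_ball
      have hmem : (0:ℂ) ∈ φ '' ball z r :=
        ⟨z, Metric.mem_ball_self hrpos, hzero⟩
      obtain ⟨ε, hεpos, hεsub⟩ := Metric.isOpen_iff.mp hopen' 0 hmem
      have hwmem : ((-(ε/2) : ℝ) : ℂ) ∈ Metric.ball (0:ℂ) ε := by
        rw [Metric.mem_ball, dist_zero_right]
        simp only [Complex.norm_real, Real.norm_eq_abs]
        rw [abs_of_nonpos (by linarith)]
        linarith
      obtain ⟨z₁, hz₁mem, hz₁eq⟩ := hεsub hwmem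
      have hz₁B : z₁ ∈ ball (0:ℂ) 1 := hsub hz₁mem
      have := harg z₁ hz₁B
      rw [hz₁eq, Complex.arg_ofReal_of_neg (by linarith)] at this
      rw [abs_of_pos Real.pi_pos] at this
      nlinarith [Real.pi_pos]
  have hφre : ∀ z ∈ ball (0:ℂ) 1, 0 < (φ z).re := by
    intro z hz
    have h1' : |Complex.arg (φ z)| < Real.pi / 2 := by
      have := harg z hz
      nlinarith [Real.pi_pos]
    rcases Complex.abs_arg_lt_pi_div_two_iff.mp h1' with h | h
    · exact h
    · exact absurd h (hφne z hz)
  -- Step 3 : L = log ∘ φ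
  set L : ℂ → ℂ := fun z => Complex.log (φ z) with hL_def
  have hLd : DifferentiableOn ℂ L (ball (0:ℂ) 1) := by
    intro z hz
    exact ((datB hφd hz).clog (Or.inl (hφre z hz))).differentiableWithinAt
  have hL0 : L 0 = 0 := by rw [hL_def]; simp [hφ0, Complex.log_one]
  have hφexp : ∀ z ∈ ball (0:ℂ) 1, φ z = Complex.exp (L z) :=
    fun z hz => (Complex.exp_log (hφne z hz)).symm
  set ℓ₁ : ℂ := deriv L 0 with hℓ₁_def
  set ℓ₂ : ℂ := iteratedDeriv 2 L 0 with hℓ₂_def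
  -- φ derivatives
  have hφexp1 : Set.EqOn φ (fun z => Complex.exp ((1:ℂ) * L z)) (ball (0:ℂ) 1) := by
    intro z hz
    show φ z = Complex.exp (1 * L z)
    rw [one_mul]
    exact hφexp z hz
  obtain ⟨hφ1, hφ2⟩ := exp_comp_derivs hLd hL0 1
  have hc1 : deriv φ 0 = ℓ₁ := by rw [deriv_congrB hφexp1, hφ1]; ring
  have hc2 : iteratedDeriv 2 φ 0 = ℓ₂ + ℓ₁ ^ 2 := by
    rw [iteratedDeriv2_congrB hφexp1, hφ2]; ring
  -- Step 5 : coefficients of g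
  have hEg : Set.EqOn (fun z => z * deriv g z) (fun z => φ z * g z) (ball (0:ℂ) 1) := by
    intro z hz
    have hu' := hune z hz
    show z * deriv g z = φ z * g z
    rw [hφ_def, hgz z hz]
    field_simp
  have hB2 : iteratedDeriv 2 g 0 = 2 * ℓ₁ := by
    have e := iteratedDeriv2_congrB hEg
    rw [iteratedDeriv2_mulB (f := fun z => z) differentiableOn_id (derivB hg),
      iteratedDeriv2_mulB hφd hg] at e
    simp only [id2_id, deriv_id'', h0, h1, hφ0, hc1, mul_zero, zero_mul, mul_one, one_mul,
      add_zero, zero_add] at e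
    have : deriv (deriv g) 0 = iteratedDeriv 2 g 0 := by rw [id2]
    rw [this] at e
    linear_combination e
  have hB3 : iteratedDeriv 3 g 0 = (3 * ℓ₂ + 9 * ℓ₁ ^ 2) / 2 := by
    have e := iteratedDeriv3_congrB hEg
    rw [iteratedDeriv3_mulB (f := fun z => z) differentiableOn_id (derivB hg),
      iteratedDeriv3_mulB hφd hg] at e
    have hid3 : iteratedDeriv 3 (fun z : ℂ => z) 0 = 0 := by simp [id3]
    have hdd : iteratedDeriv 2 (deriv g) 0 = iteratedDeriv 3 g 0 := by rw [id2, id3]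
    simp only [id2_id, hid3, deriv_id'', h0, h1, hφ0, hc1, hc2, hB2, mul_zero, zero_mul,
      mul_one, one_mul, add_zero, zero_add, hdd] at e
    linear_combination e / 2
  -- Step 6 : h = exp (a * L)
  set a : ℂ := ((β⁻¹ : ℝ) : ℂ) with ha_def
  obtain ⟨hh1, hh2⟩ := exp_comp_derivs hLd hL0 a
  set h : ℂ → ℂ := fun z => Complex.exp (a * L z) with hh_def
  have hhd : DifferentiableOn ℂ h (ball (0:ℂ) 1) :=
    fun z hz => (((datB hLd hz).const_mul a).cexp).differentiableWithinAt
  have hh0 : h 0 = 1 := by rw [hh_def]; simp [hL0]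
  have hLim : ∀ z ∈ ball (0:ℂ) 1, (L z).im = Complex.arg (φ z) := by
    intro z _
    exact Complex.log_im (φ z)
  have hhre : ∀ z ∈ ball (0:ℂ) 1, 0 < (h z).re := by
    intro z hz
    rw [hh_def]
    simp only [Complex.exp_re]
    apply mul_pos (Real.exp_pos _)
    apply Real.cos_pos_of_mem_Ioo
    have him : (a * L z).im = β⁻¹ * Complex.arg (φ z) := by
      rw [ha_def, Complex.mul_im, hLim z hz]
      simp [Complex.log_im]
    rw [him]
    have habs : |β⁻¹ * Complex.arg (φ z)| < Real.pi / 2 := by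
      rw [abs_mul, abs_of_pos (inv_pos.mpr hβpos)]
      have h2 := harg z hz
      calc β⁻¹ * |Complex.arg (φ z)| < β⁻¹ * (Real.pi * β / 2) :=
            mul_lt_mul_of_pos_left h2 (inv_pos.mpr hβpos)
        _ = Real.pi / 2 := by field_simp
    obtain ⟨hl, hr⟩ := abs_lt.mp habs
    exact ⟨hl, hr⟩
  -- Step 7 : ψ
  have hden : ∀ z ∈ ball (0:ℂ) 1, h z + 1 ≠ 0 := by
    intro z hz hzero
    have he : h z = -1 := eq_neg_of_add_eq_zero_left hzero
    have := hhre z hz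
    rw [he] at this
    simp at this
    linarith
  set ψ : ℂ → ℂ := fun z => (h z - 1) / (h z + 1) with hψ_def
  have hψd : DifferentiableOn ℂ ψ (ball (0:ℂ) 1) :=
    (hhd.sub (differentiableOn_const 1)).div (hhd.add (differentiableOn_const 1)) hden
  have hψ0 : ψ 0 = 0 := by rw [hψ_def]; simp [hh0]
  have hψm : Set.MapsTo ψ (ball (0:ℂ) 1) (ball (0:ℂ) 1) := by
    intro z hz
    have hlt : ‖h z - 1‖ < ‖h z + 1‖ := by
      have h3 : Complex.normSq (h z - 1) < Complex.normSq (h z + 1) := by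
        simp only [Complex.normSq_apply, Complex.add_re, Complex.add_im, Complex.sub_re,
          Complex.sub_im, Complex.one_re, Complex.one_im]
        nlinarith [hhre z hz]
      rw [← Complex.sq_norm, ← Complex.sq_norm] at h3
      exact lt_of_pow_lt_pow_left₀ 2 (norm_nonneg _) h3
    rw [Metric.mem_ball, dist_zero_right, hψ_def]
    simp only [norm_div]
    exact (div_lt_one (lt_of_le_of_lt (norm_nonneg _) hlt)).mpr hlt
  have hψden : ∀ z ∈ ball (0:ℂ) 1, DifferentiableAt ℂ (fun w => h w + 1) z :=
    fun z hz => (datB hhd hz).add_const 1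
  have eψ : Set.EqOn (deriv ψ) (fun z => 2 * deriv h z / (h z + 1) ^ 2) (ball (0:ℂ) 1) := by
    intro z hz
    rw [hψ_def]
    rw [deriv_fun_div ((datB hhd hz).sub_const 1) (hψden z hz) (hden z hz)]
    rw [deriv_sub_const, deriv_add_const]
    congr 1
    ring
  have hd1 : deriv ψ 0 = a * ℓ₁ / 2 := by
    rw [eψ memB]
    show 2 * deriv h 0 / (h 0 + 1) ^ 2 = a * ℓ₁ / 2
    rw [hh0, hh1, ← hℓ₁_def]
    ring
  have hd2 : iteratedDeriv 2 ψ 0 = a * ℓ₂ / 2 := by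
    have h2 : deriv (deriv ψ) 0 = deriv (fun z => 2 * deriv h z / (h z + 1) ^ 2) 0 :=
      eqOn_derivB eψ memB
    have hdenpow : DifferentiableAt ℂ (fun z => (h z + 1) ^ 2) 0 := (hψden 0 memB).pow 2
    have hdenne : ((h 0 + 1) ^ 2 : ℂ) ≠ 0 := pow_ne_zero 2 (hden 0 memB)
    rw [id2, h2, deriv_fun_div ((datB (derivB hhd) memB).const_mul 2) hdenpow hdenne,
      deriv_const_mul 2 (datB (derivB hhd) memB), ((hψden 0 memB).hasDerivAt.fun_pow 2).deriv, deriv_add_const]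
    have hdd2 : deriv (deriv h) 0 = iteratedDeriv 2 h 0 := by rw [id2]
    rw [hdd2, hh2, hh1, hh0, ← hℓ₁_def, ← hℓ₂_def]
    ring
  -- Step 8 : Schwarz bounds
  obtain ⟨hS1, hS2⟩ := schwarz_coeff hψd hψm hψ0
  rw [hd1] at hS1 hS2
  rw [hd2] at hS2
  have haabs : ‖a‖ = β⁻¹ := by
    rw [ha_def, Complex.norm_real, Real.norm_eq_abs, abs_of_pos (inv_pos.mpr hβpos)]
  set x : ℝ := ‖ℓ₁‖ with hx_def
  set y : ℝ := ‖ℓ₂‖ with hy_def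
  have hx0 : 0 ≤ x := norm_nonneg _
  have hy0 : 0 ≤ y := norm_nonneg _
  clear_value u φ L h ψ a ℓ₁ ℓ₂ x y
  have e1 : ‖a * ℓ₁ / 2‖ = β⁻¹ * x / 2 := by
    rw [hx_def, norm_div, norm_mul, haabs]
    norm_num
  have e2 : ‖a * ℓ₂ / 2‖ = β⁻¹ * y / 2 := by
    rw [hy_def, norm_div, norm_mul, haabs]
    norm_num
  rw [e1] at hS1 hS2
  rw [e2] at hS2
  have hxb : x ≤ 2 * β := by
    have h' := mul_le_mul_of_nonneg_left hS1 hβpos.le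
    have he : β * (β⁻¹ * x / 2) = x / 2 := by field_simp
    rw [he, mul_one] at h'
    linarith
  have hyb : β * y ≤ 4 * β ^ 2 - x ^ 2 := by
    have h' := mul_le_mul_of_nonneg_left hS2 (sq_nonneg β)
    have he1 : β ^ 2 * (β⁻¹ * y / 2) = β * y / 2 := by field_simp
    have he2 : β ^ 2 * (2 * (1 - (β⁻¹ * x / 2) ^ 2)) = 2 * β ^ 2 - x ^ 2 / 2 := by
      field_simp
    rw [he1, he2] at h'
    linarith
  -- Step 9 : final algebra
  have hfact : 2 * (iteratedDeriv 2 g 0 / 2) ^ 2 * (iteratedDeriv 3 g 0 / 6)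
      - (iteratedDeriv 3 g 0 / 6) ^ 2 - 2 * (iteratedDeriv 2 g 0 / 2) ^ 2 + 1
      = (1 - (ℓ₂ / 4 + 3 * ℓ₁ ^ 2 / 4)) * (1 + ℓ₂ / 4 - 5 * ℓ₁ ^ 2 / 4) := by
    rw [hB2, hB3]
    ring
  rw [hfact, norm_mul]
  have habs_sub : ∀ (w v : ℂ), ‖w - v‖ ≤ ‖w‖ + ‖v‖ := by
    intro w v
    simpa [sub_eq_add_neg] using norm_add_le w (-v)
  have hA : ‖1 - (ℓ₂ / 4 + 3 * ℓ₁ ^ 2 / 4)‖ ≤ 1 + 3 * β ^ 2 := by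
    have t1 : ‖1 - (ℓ₂ / 4 + 3 * ℓ₁ ^ 2 / 4)‖ ≤ 1 + (y / 4 + 3 * x ^ 2 / 4) := by
      calc ‖1 - (ℓ₂ / 4 + 3 * ℓ₁ ^ 2 / 4)‖
          ≤ ‖1‖ + ‖ℓ₂ / 4 + 3 * ℓ₁ ^ 2 / 4‖ := habs_sub _ _
        _ ≤ 1 + (‖ℓ₂ / 4‖ + ‖3 * ℓ₁ ^ 2 / 4‖) := by
            rw [norm_one]
            exact add_le_add le_rfl (norm_add_le _ _)
        _ = 1 + (y / 4 + 3 * x ^ 2 / 4) := by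
            rw [hx_def, hy_def, norm_div, norm_div, norm_mul, norm_pow]
            simp [Complex.norm_ofNat]
    have t2 := (final_bound hβ0 hx0 hy0 hxb hyb).1
    linarith
  have hB : ‖1 + ℓ₂ / 4 - 5 * ℓ₁ ^ 2 / 4‖ ≤ 1 + 5 * β ^ 2 := by
    have t1 : ‖1 + ℓ₂ / 4 - 5 * ℓ₁ ^ 2 / 4‖ ≤ 1 + (y / 4 + 5 * x ^ 2 / 4) := by
      calc ‖1 + ℓ₂ / 4 - 5 * ℓ₁ ^ 2 / 4‖
          ≤ ‖1 + ℓ₂ / 4‖ + ‖5 * ℓ₁ ^ 2 / 4‖ := habs_sub _ _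
        _ ≤ 1 + ‖ℓ₂ / 4‖ + ‖5 * ℓ₁ ^ 2 / 4‖ := by
            have := norm_add_le 1 (ℓ₂ / 4)
            rw [norm_one] at this
            linarith
        _ = 1 + (y / 4 + 5 * x ^ 2 / 4) := by
            rw [hx_def, hy_def, norm_div, norm_div, norm_mul, norm_pow]
            simp [Complex.norm_ofNat]
            ring
    have t2 := (final_bound hβ0 hx0 hy0 hxb hyb).2
    linarith
  calc ‖1 - (ℓ₂ / 4 + 3 * ℓ₁ ^ 2 / 4)‖ * ‖1 + ℓ₂ / 4 - 5 * ℓ₁ ^ 2 / 4‖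
      ≤ (1 + 3 * β ^ 2) * (1 + 5 * β ^ 2) :=
        mul_le_mul hA hB (norm_nonneg _) (by positivity)
    _ = 15 * β ^ 4 + 8 * β ^ 2 + 1 := by ring
end

section
/- Let Φ : 𝕌 → ℂ be biholomorphic with Φ(0) = 1 and Re Φ > 0 on 𝕌, and fix λ ∈ ℂ. Let g be holomorphic on 𝕌 with g(0)=0, g'(0)=1, such that z g'(z)/g(z) is subordinate to Φ. Writing g(z) = z + b₂z² + b₃z³ + ..., we have |b₃ − λ b₂²| ≤ (|Φ'(0)|/2)·max{1, |Φ''(0)/(2Φ'(0)) + (1 − 2λ)Φ'(0)|}. -/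
open Complex Metric Set
open Filter
open scoped Topology

-- helper: analytic ⇒ strict deriv at deriv value
lemma AnalyticAt.hasStrictDerivAt' {f : ℂ → ℂ} {x : ℂ} (h : AnalyticAt ℂ f x) :
    HasStrictDerivAt f (deriv f x) x := by
  obtain ⟨p, hp⟩ := h
  have h1 := hp.hasStrictDerivAt
  have h2 : deriv f x = (p 1) fun _ => 1 := h1.hasDerivAt.deriv
  rw [h2]; exact h1

lemma deriv_ne_zero_of_injOn {f : ℂ → ℂ} {s : Set ℂ} (hso : IsOpen s)
    (hf : DifferentiableOn ℂ f s) (hinj : Set.InjOn f s) {w : ℂ} (hw : w ∈ s) :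
    deriv f w ≠ 0 := by
  intro hd0
  have hA : AnalyticOnNhd ℂ f s := hf.analyticOnNhd hso
  set F : ℂ → ℂ := fun z => f z - f w with hFdef
  have hFA : AnalyticAt ℂ F w := (hA w hw).sub analyticAt_const
  have hsmem : s ∈ 𝓝 w := hso.mem_nhds hw
  -- F is not eventually zero
  have hne : ¬ (∀ᶠ z in 𝓝 w, F z = 0) := by
    intro h
    have h2 : ∀ᶠ z in 𝓝 w, F z = 0 ∧ z ∈ s := h.and hsmem
    obtain ⟨ε, hε, hball⟩ := Metric.eventually_nhds_iff_ball.mp h2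
    have hmem : w + (ε/2 : ℝ) ∈ ball w ε := by
      rw [mem_ball, dist_eq]
      simp only [add_sub_cancel_left, Complex.norm_real, Real.norm_eq_abs]
      rw [abs_of_pos (half_pos hε)]
      exact half_lt_self hε
    obtain ⟨hF0, hzs⟩ := hball _ hmem
    have : w + (ε/2 : ℝ) = w := hinj hzs hw (sub_eq_zero.mp hF0)
    simp only [add_eq_left] at this
    exact (half_pos hε).ne' (by exact_mod_cast congrArg Complex.re this)
  have horder : analyticOrderAt F w ≠ ⊤ := fun h => hne (analyticOrderAt_eq_top.mp h)
  obtain ⟨n, hn⟩ := ENat.ne_top_iff_exists.mp horder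
  obtain ⟨G, hGA, hG0, hev⟩ := (hFA.analyticOrderAt_eq_natCast (n := n)).mp hn.symm
  have hFw : F w = 0 := by simp [hFdef]
  -- n ≥ 2
  have hn0 : n ≠ 0 := by
    rintro rfl
    have := hev.self_of_nhds
    simp [hFw] at this
    exact hG0 this.symm
  have hderivF : deriv F w = 0 := by
    have : deriv F w = deriv f w - 0 := by
      simp [hFdef, deriv_fun_sub ((hA w hw).differentiableAt) (differentiableAt_const _)]
    simp [this, hd0]
  have hn1 : n ≠ 1 := by
    rintro rfl
    have heq : deriv F w = G w := by
      have h1 : F =ᶠ[𝓝 w] fun z => (z - w) * G z := by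
        filter_upwards [hev] with z hz; simpa using hz
      rw [h1.deriv_eq]
      have hG' : HasDerivAt G (deriv G w) w := hGA.differentiableAt.hasDerivAt
      have := (((hasDerivAt_id w).sub_const w).fun_mul hG')
      have h2 := this.deriv
      simpa using h2
    rw [hderivF] at heq
    exact hG0 heq.symm
  have hn2 : 2 ≤ n := by omega
  -- construct n-th root of G near w
  set c : ℂ := Complex.exp (Complex.log (G w) / n) with hcdef
  have hcne : c ≠ 0 := Complex.exp_ne_zero _
  have hcn : c ^ n = G w := by
    rw [hcdef, ← Complex.exp_nat_mul]
    rw [mul_div_cancel₀ _ (by exact_mod_cast hn0 : (n:ℂ) ≠ 0)]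
    exact Complex.exp_log hG0
  set r : ℂ → ℂ := fun z => c * Complex.exp (Complex.log (G z / G w) / n) with hrdef
  have hrA : AnalyticAt ℂ r w := by
    apply analyticAt_const.mul
    apply AnalyticAt.cexp
    apply AnalyticAt.div _ analyticAt_const (by exact_mod_cast hn0 : (n:ℂ) ≠ 0)
    exact (hGA.div analyticAt_const hG0).clog (by
      simp [div_self hG0, Complex.one_mem_slitPlane])
  have hrw : r w = c := by simp [hrdef, div_self hG0]
  have hrn : ∀ᶠ z in 𝓝 w, r z ^ n = G z := by
    have hGne : ∀ᶠ z in 𝓝 w, G z ≠ 0 := hGA.continuousAt.eventually_ne hG0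
    filter_upwards [hGne] with z hz
    rw [hrdef]
    simp only [mul_pow, ← Complex.exp_nat_mul, hcn]
    rw [mul_div_cancel₀ _ (by exact_mod_cast hn0 : (n:ℂ) ≠ 0)]
    rw [Complex.exp_log (div_ne_zero hz hG0)]
    field_simp
  set ψ : ℂ → ℂ := fun z => (z - w) * r z with hψdef
  have hψA : AnalyticAt ℂ ψ w := (analyticAt_id.sub analyticAt_const).mul hrA
  have hψ0 : ψ w = 0 := by simp [hψdef]
  have hFψ : ∀ᶠ z in 𝓝 w, F z = ψ z ^ n := by
    filter_upwards [hev, hrn] with z h1 h2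
    rw [hψdef]
    simp only [mul_pow, h2]
    simpa using h1
  have hdψ : HasDerivAt ψ c w := by
    have hr' : HasDerivAt r (deriv r w) w := hrA.differentiableAt.hasDerivAt
    have := ((hasDerivAt_id w).sub_const w).fun_mul hr'
    simpa [hrw] using this
  have hstrict : HasStrictDerivAt ψ c w := by
    have h1 := hψA.hasStrictDerivAt'
    rwa [hdψ.deriv] at h1
  have hmap : Filter.map ψ (𝓝 w) = 𝓝 (0:ℂ) := by
    rw [← hψ0]; exact hstrict.map_nhds_eq hcne
  have hV : ∀ᶠ z in 𝓝 w, F z = ψ z ^ n ∧ z ∈ s := hFψ.and hsmem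
  have himg : ψ '' {z | F z = ψ z ^ n ∧ z ∈ s} ∈ 𝓝 (0:ℂ) := by
    rw [← hmap]; exact image_mem_map hV
  obtain ⟨δ, hδ, hsubs⟩ := Metric.mem_nhds_iff.mp himg
  set u : ℂ := ((δ/2 : ℝ) : ℂ) with hudef
  set ζ : ℂ := Complex.exp ((2 * Real.pi / n : ℝ) * Complex.I) with hζdef
  have hζabs : ‖ζ‖ = 1 := by
    rw [hζdef, Complex.norm_exp]; simp
  have hζn : ζ ^ n = 1 := by
    rw [hζdef, ← Complex.exp_nat_mul]
    have hnC : (n:ℂ) ≠ 0 := by exact_mod_cast hn0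
    have : (n:ℂ) * ((2 * Real.pi / n : ℝ) * Complex.I) = 2 * Real.pi * Complex.I := by
      push_cast
      field_simp
    rw [this, Complex.exp_two_pi_mul_I]
  have hζ1 : ζ ≠ 1 := by
    rw [hζdef, Ne, Complex.exp_eq_one_iff]
    rintro ⟨k, hk⟩
    have him : (2 * Real.pi / n : ℝ) = (k : ℝ) * (2 * Real.pi) := by
      have := congrArg Complex.im hk
      simpa using this
    have hπ := Real.pi_pos
    have hnn : (2:ℝ) ≤ n := by exact_mod_cast hn2
    rcases le_or_gt 1 k with hk1 | hk1
    · have : (1:ℝ) ≤ (k:ℝ) := by exact_mod_cast hk1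
      have h2 : 2 * Real.pi / n ≤ Real.pi := by
        rw [div_le_iff₀ (by linarith)]
        nlinarith
      nlinarith
    · have : (k:ℝ) ≤ 0 := by exact_mod_cast (by omega : k ≤ 0)
      have h2 : 0 < 2 * Real.pi / n := by positivity
      nlinarith
  have huabs : ‖u‖ = δ/2 := by
    rw [hudef, Complex.norm_real, Real.norm_eq_abs, abs_of_pos (half_pos hδ)]
  have hu0 : u ≠ 0 := by
    rw [hudef, Ne, Complex.ofReal_eq_zero]
    exact (half_pos hδ).ne'
  obtain ⟨z₁, hz₁, hψ₁⟩ := hsubs (by simp [mem_ball, dist_eq, huabs, half_lt_self hδ] :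
    u ∈ ball (0:ℂ) δ)
  obtain ⟨z₂, hz₂, hψ₂⟩ := hsubs (by
    simp only [mem_ball, dist_zero_right, norm_mul, hζabs, mul_one]
    rw [huabs]; exact half_lt_self hδ : u * ζ ∈ ball (0:ℂ) δ)
  have hFz₁ : F z₁ = u ^ n := by rw [hz₁.1, hψ₁]
  have hFz₂ : F z₂ = u ^ n := by rw [hz₂.1, hψ₂, mul_pow, hζn, mul_one]
  have hfz : f z₁ = f z₂ := by
    have := hFz₁.trans hFz₂.symm
    simpa [hFdef, sub_eq_sub_iff_sub_eq_sub] using this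
  have hz12 : z₁ = z₂ := hinj hz₁.2 hz₂.2 hfz
  rw [hz12, hψ₂] at hψ₁
  exact hζ1 (by field_simp at hψ₁; tauto)

lemma schwarz_pick_zero {h : ℂ → ℂ} (hd : DifferentiableOn ℂ h (ball 0 1))
    (hb : ∀ z ∈ ball (0:ℂ) 1, ‖h z‖ ≤ 1) :
    ‖deriv h 0‖ ≤ 1 - ‖h 0‖^2 := by
  have h0B : (0:ℂ) ∈ ball (0:ℂ) 1 := mem_ball_self one_pos
  set a : ℂ := h 0 with ha
  have ha1 : ‖a‖ ≤ 1 := hb 0 h0B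
  rcases eq_or_lt_of_le ha1 with heq | hlt
  · -- |a| = 1 : h is constant by max modulus
    have hmax : IsMaxOn (norm ∘ h) (ball (0:ℂ) 1) 0 := by
      intro z hz
      simp only [Function.comp_apply, ← ha, heq]
      exact hb z hz
    have hcon := Complex.eqOn_of_isPreconnected_of_isMaxOn_norm
      (convex_ball (0:ℂ) 1).isPreconnected isOpen_ball hd h0B hmax
    have hEE : h =ᶠ[𝓝 (0:ℂ)] fun _ => a := by
      filter_upwards [isOpen_ball.mem_nhds h0B] with z hz
      exact hcon hz
    rw [hEE.deriv_eq, deriv_const]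
    simp [heq]
  · -- |a| < 1
    have hPos : (0:ℝ) < 1 - Complex.normSq a := by
      rw [← Complex.sq_norm]; nlinarith [norm_nonneg a]
    have hQ : ((1:ℂ) - Complex.normSq a) ≠ 0 := by
      intro hq
      have h2 : ((1 - Complex.normSq a : ℝ) : ℂ) = 0 := by push_cast; linear_combination hq
      rw [Complex.ofReal_eq_zero] at h2; linarith
    set D : ℂ → ℂ := fun z => 1 - (starRingEnd ℂ) a * h z with hDdef
    have hDne : ∀ z ∈ ball (0:ℂ) 1, D z ≠ 0 := by
      intro z hz hD0
      have h1 : (starRingEnd ℂ) a * h z = 1 := by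
        have := sub_eq_zero.mp hD0; linear_combination -this
      have h2 : ‖(starRingEnd ℂ) a * h z‖ ≤ ‖a‖ := by
        rw [norm_mul, Complex.norm_conj]
        calc ‖a‖ * ‖h z‖ ≤ ‖a‖ * 1 :=
          mul_le_mul_of_nonneg_left (hb z hz) (norm_nonneg a)
        _ = ‖a‖ := mul_one _
      rw [h1] at h2
      simp at h2
      linarith
    set H : ℂ → ℂ := fun z => (h z - a) / D z with hHdef
    have hH0 : H 0 = 0 := by simp [hHdef, ha]
    have hHd : DifferentiableOn ℂ H (ball (0:ℂ) 1) := by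
      apply DifferentiableOn.div
      · exact hd.sub (differentiableOn_const a)
      · exact (differentiableOn_const (1:ℂ)).sub ((differentiableOn_const _).mul hd)
      · exact hDne
    have hkey : ∀ u : ℂ, Complex.normSq (1 - (starRingEnd ℂ) a * u) - Complex.normSq (u - a)
        = (1 - Complex.normSq a) * (1 - Complex.normSq u) := by
      intro u
      simp only [Complex.normSq_apply, Complex.sub_re, Complex.sub_im, Complex.mul_re,
        Complex.mul_im, Complex.one_re, Complex.one_im, Complex.conj_re, Complex.conj_im]
      ring
    have hHb : ∀ z ∈ ball (0:ℂ) 1, ‖H z‖ ≤ 1 := by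
      intro z hz
      rw [hHdef]
      simp only [norm_div]
      rw [div_le_one (by
        have := hDne z hz
        exact (norm_pos_iff.mpr this))]
      have h1 : Complex.normSq (h z - a) ≤ Complex.normSq (D z) := by
        have h2 := hkey (h z)
        have h3 : 0 ≤ (1 - Complex.normSq a) * (1 - Complex.normSq (h z)) := by
          apply mul_nonneg
          · rw [← Complex.sq_norm]; nlinarith [norm_nonneg a]
          · rw [← Complex.sq_norm]; nlinarith [norm_nonneg (h z), hb z hz]
        rw [hDdef]
        simp only []
        nlinarith [h2]
      calc ‖h z - a‖ = Real.sqrt (Complex.normSq (h z - a)) := by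
            rw [Complex.norm_def]
        _ ≤ Real.sqrt (Complex.normSq (D z)) := Real.sqrt_le_sqrt h1
        _ = ‖D z‖ := by rw [Complex.norm_def]
    have hub : ‖deriv H 0‖ ≤ 1 := by
      apply le_of_forall_pos_le_add
      intro ε hε
      have hmaps : MapsTo H (ball (0:ℂ) 1) (ball (H 0) (1 + ε)) := by
        intro z hz
        rw [hH0, mem_ball, dist_zero_right]
        calc ‖H z‖ ≤ 1 := hHb z hz
          _ < 1 + ε := by linarith
      have := Complex.norm_deriv_le_div_of_mapsTo_ball hHd (hmaps.mono_right ball_subset_closedBall) one_pos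
      linarith [this, (by rw [div_one] : (1+ε)/1 = 1+ε)]
    -- compute deriv H 0
    have hhd : HasDerivAt h (deriv h 0) 0 :=
      (hd.differentiableAt (isOpen_ball.mem_nhds h0B)).hasDerivAt
    have hnum : HasDerivAt (fun z => h z - a) (deriv h 0) 0 := hhd.sub_const a
    have hden : HasDerivAt D (-((starRingEnd ℂ) a * deriv h 0)) 0 := by
      have := (hhd.const_mul ((starRingEnd ℂ) a)).const_sub 1
      simpa [hDdef] using this
    have hD0 : D 0 = 1 - Complex.normSq a := by
      rw [hDdef]
      simp only [← ha]
      rw [mul_comm, Complex.mul_conj]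
    have hDiv := hnum.fun_div hden (hDne 0 h0B)
    have hderH : deriv H 0 = deriv h 0 / (1 - Complex.normSq a) := by
      rw [← hHdef] at hDiv
      rw [hDiv.deriv, hD0]
      simp only [← ha, sub_self, zero_mul, mul_comm]
      field_simp [hQ]
      ring
    rw [hderH, norm_div] at hub
    have habs : ‖(1:ℂ) - Complex.normSq a‖ = 1 - Complex.normSq a := by
      have h1 : ((1:ℂ) - Complex.normSq a) = ((1 - Complex.normSq a : ℝ) : ℂ) := by push_cast; ring
      rw [h1, Complex.norm_real, Real.norm_eq_abs, abs_of_pos hPos]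
    rw [habs, div_le_one hPos] at hub
    rw [← Complex.sq_norm] at hub
    linarith

lemma deriv_congr_ball (F G : ℂ → ℂ) (h : ∀ z ∈ ball (0:ℂ) 1, F z = G z) {z : ℂ}
    (hz : z ∈ ball (0:ℂ) 1) : deriv F z = deriv G z :=
  Filter.EventuallyEq.deriv_eq (Filter.eventuallyEq_of_mem (isOpen_ball.mem_nhds hz) h)

lemma coeff_bound {c1 c2 t : ℂ} (h1 : ‖c1‖ ≤ 1)
    (h2 : ‖c2‖ ≤ 1 - ‖c1‖ ^ 2) :
    ‖c2 + t * c1 ^ 2‖ ≤ max 1 (‖t‖) := by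
  have habs : ‖c2 + t * c1 ^ 2‖
      ≤ ‖c2‖ + ‖t‖ * ‖c1‖ ^ 2 := by
    calc ‖c2 + t * c1 ^ 2‖ ≤ ‖c2‖ + ‖t * c1 ^ 2‖ :=
          norm_add_le _ _
      _ = ‖c2‖ + ‖t‖ * ‖c1‖ ^ 2 := by rw [norm_mul, norm_pow]
  have hx0 : 0 ≤ ‖c1‖ := norm_nonneg _
  have ht0 : 0 ≤ ‖t‖ := norm_nonneg _
  rcases le_total (‖t‖) 1 with hT | hT
  · refine le_trans ?_ (le_max_left _ _)
    nlinarith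
  · refine le_trans ?_ (le_max_right _ _)
    have hq : ‖c1‖ ^ 2 ≤ 1 := by nlinarith
    nlinarith [mul_nonneg (sub_nonneg.2 hT) (sub_nonneg.2 hq)]

theorem fekete_szego_MPhi (Φ g : ℂ → ℂ) (lam : ℂ)
    (hΦ : DifferentiableOn ℂ Φ (ball (0:ℂ) 1))
    (hΦinj : Set.InjOn Φ (ball (0:ℂ) 1))
    (hΦ0 : Φ 0 = 1)
    (hΦre : ∀ z ∈ ball (0:ℂ) 1, 0 < (Φ z).re)
    (hg : DifferentiableOn ℂ g (ball (0:ℂ) 1))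
    (h0 : g 0 = 0) (h1 : deriv g 0 = 1)
    (hsub : ∀ z ∈ ball (0:ℂ) 1, z ≠ 0 → z * deriv g z / g z ∈ Φ '' (ball (0:ℂ) 1)) :
    ‖iteratedDeriv 3 g 0 / 6 - lam * (iteratedDeriv 2 g 0 / 2) ^ 2‖
      ≤ ‖deriv Φ 0‖ / 2 *
        max 1 ‖iteratedDeriv 2 Φ 0 / (2 * deriv Φ 0) + (1 - 2 * lam) * deriv Φ 0‖ := by
  have hBo : IsOpen (ball (0:ℂ) 1) := isOpen_ball
  have hB0 : (0:ℂ) ∈ ball (0:ℂ) 1 := mem_ball_self one_pos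
  have hBn : ball (0:ℂ) 1 ∈ 𝓝 (0:ℂ) := hBo.mem_nhds hB0
  -- g nonzero off 0
  have hgne : ∀ z ∈ ball (0:ℂ) 1, z ≠ 0 → g z ≠ 0 := by
    intro z hz hz0 hgz
    obtain ⟨w, hwB, hw⟩ := hsub z hz hz0
    rw [hgz, div_zero] at hw
    have := hΦre w hwB
    rw [hw] at this
    simp at this
  -- q = dslope g 0
  set q : ℂ → ℂ := dslope g 0 with hqdef
  have hqd : DifferentiableOn ℂ q (ball (0:ℂ) 1) := (differentiableOn_dslope hBn).mpr hg
  have hq0 : q 0 = 1 := by rw [hqdef, dslope_same, h1]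
  have hgq : ∀ z, z * q z = g z := by
    intro z
    have := sub_smul_dslope g 0 z
    simpa [h0, smul_eq_mul] using this
  have hqne : ∀ z ∈ ball (0:ℂ) 1, q z ≠ 0 := by
    intro z hz
    rcases eq_or_ne z 0 with rfl | hz0
    · rw [hq0]; exact one_ne_zero
    · intro hq
      exact hgne z hz hz0 (by rw [← hgq z, hq, mul_zero])
  -- analyticity
  have hgA : AnalyticOnNhd ℂ g (ball (0:ℂ) 1) := hg.analyticOnNhd hBo
  have hqA : AnalyticOnNhd ℂ q (ball (0:ℂ) 1) := hqd.analyticOnNhd hBo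
  have hΦA : AnalyticOnNhd ℂ Φ (ball (0:ℂ) 1) := hΦ.analyticOnNhd hBo
  -- p
  set p : ℂ → ℂ := fun z => deriv g z / q z with hpdef
  have hdgd : DifferentiableOn ℂ (deriv g) (ball (0:ℂ) 1) := hgA.deriv.differentiableOn
  have hpd : DifferentiableOn ℂ p (ball (0:ℂ) 1) := hdgd.div hqd hqne
  have hpA : AnalyticOnNhd ℂ p (ball (0:ℂ) 1) := hpd.analyticOnNhd hBo
  have hp0 : p 0 = 1 := by rw [hpdef]; simp [h1, hq0]
  have hpmem : ∀ z ∈ ball (0:ℂ) 1, ∃ w ∈ ball (0:ℂ) 1, Φ w = p z := by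
    intro z hz
    rcases eq_or_ne z 0 with rfl | hz0
    · exact ⟨0, hB0, by rw [hΦ0, hp0]⟩
    · obtain ⟨w, hwB, hw⟩ := hsub z hz hz0
      refine ⟨w, hwB, ?_⟩
      rw [hw, hpdef]
      have hgz := hgne z hz hz0
      rw [← hgq z, mul_div_mul_left _ _ hz0]
  -- Φ' nonzero
  have hΦder : ∀ w ∈ ball (0:ℂ) 1, deriv Φ w ≠ 0 :=
    fun w hw => deriv_ne_zero_of_injOn hBo hΦ hΦinj hw
  -- ω
  set ω : ℂ → ℂ := fun z => Function.invFunOn Φ (ball (0:ℂ) 1) (p z) with hωdef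
  have hωB : ∀ z ∈ ball (0:ℂ) 1, ω z ∈ ball (0:ℂ) 1 := by
    intro z hz
    obtain ⟨w, hwB, hw⟩ := hpmem z hz
    exact Function.invFunOn_mem ⟨w, hwB, hw⟩
  have hωΦ : ∀ z ∈ ball (0:ℂ) 1, Φ (ω z) = p z := by
    intro z hz
    obtain ⟨w, hwB, hw⟩ := hpmem z hz
    exact Function.invFunOn_eq ⟨w, hwB, hw⟩
  have hω0 : ω 0 = 0 :=
    hΦinj (hωB 0 hB0) hB0 (by rw [hωΦ 0 hB0, hp0, hΦ0])
  -- ω differentiable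
  have hωd : DifferentiableOn ℂ ω (ball (0:ℂ) 1) := by
    intro z₀ hz₀
    apply DifferentiableAt.differentiableWithinAt
    have hw₀ : ω z₀ ∈ ball (0:ℂ) 1 := hωB z₀ hz₀
    have hstrict : HasStrictDerivAt Φ (deriv Φ (ω z₀)) (ω z₀) := (hΦA _ hw₀).hasStrictDerivAt'
    have hne := hΦder _ hw₀
    have he := hstrict.hasStrictFDerivAt_equiv hne
    set Ψ := he.localInverse _ _ _ with hΨdef
    have hΨd : DifferentiableAt ℂ Ψ (Φ (ω z₀)) := he.to_localInverse.differentiableAt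
    have hpc : ContinuousAt p z₀ := (hpd.differentiableAt (hBo.mem_nhds hz₀)).continuousAt
    have hpz₀ : p z₀ = Φ (ω z₀) := (hωΦ z₀ hz₀).symm
    have hev : ∀ᶠ z in 𝓝 z₀, ω z = Ψ (p z) := by
      have ha1 : ∀ᶠ y in 𝓝 (Φ (ω z₀)), Φ (Ψ y) = y := he.eventually_right_inverse
      have ha2 : ∀ᶠ y in 𝓝 (Φ (ω z₀)), Ψ y ∈ ball (0:ℂ) 1 := by
        have hcont : ContinuousAt Ψ (Φ (ω z₀)) := he.localInverse_continuousAt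
        have himg : Ψ (Φ (ω z₀)) = ω z₀ := he.localInverse_apply_image
        have : ball (0:ℂ) 1 ∈ 𝓝 (Ψ (Φ (ω z₀))) := by rw [himg]; exact hBo.mem_nhds hw₀
        exact hcont.eventually_mem this
      have ha3 : ∀ᶠ z in 𝓝 z₀, Φ (Ψ (p z)) = p z ∧ Ψ (p z) ∈ ball (0:ℂ) 1 := by
        have := ha1.and ha2
        rw [← hpz₀] at this
        exact hpc.eventually this
      have ha4 : ∀ᶠ z in 𝓝 z₀, z ∈ ball (0:ℂ) 1 := hBo.mem_nhds hz₀
      filter_upwards [ha3, ha4] with z hz3 hz4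
      exact hΦinj (hωB z hz4) hz3.2 (by rw [hωΦ z hz4, hz3.1])
    have hcmp : DifferentiableAt ℂ (fun z => Ψ (p z)) z₀ := by
      apply DifferentiableAt.comp
      · rw [← hpz₀] at hΨd; exact hΨd
      · exact hpd.differentiableAt (hBo.mem_nhds hz₀)
    exact hcmp.congr_of_eventuallyEq hev
  -- ω analytic and maps ball to ball
  have hωA : AnalyticOnNhd ℂ ω (ball (0:ℂ) 1) := hωd.analyticOnNhd hBo
  have hωmaps : MapsTo ω (ball (0:ℂ) 1) (ball (0:ℂ) 1) := fun z hz => hωB z hz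
  -- hh = dslope ω 0
  set hh : ℂ → ℂ := dslope ω 0 with hhdef
  have hhd : DifferentiableOn ℂ hh (ball (0:ℂ) 1) := (differentiableOn_dslope hBn).mpr hωd
  have hhb : ∀ z ∈ ball (0:ℂ) 1, ‖hh z‖ ≤ 1 := by
    intro z hz
    have hm : MapsTo ω (ball (0:ℂ) 1) (ball (ω 0) 1) := by rw [hω0]; exact hωmaps
    have := Complex.norm_dslope_le_div_of_mapsTo_ball hωd (hm.mono_right ball_subset_closedBall) hz
    simpa using this
  have hh0 : hh 0 = deriv ω 0 := dslope_same ω 0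
  have hωh : ∀ z, z * hh z = ω z := by
    intro z
    have := sub_smul_dslope ω 0 z
    simpa [hω0, smul_eq_mul] using this
  -- coefficient bounds
  have hc1 : ‖deriv ω 0‖ ≤ 1 := by
    have hm : MapsTo ω (ball (0:ℂ) 1) (ball (0:ℂ) 1) := hωmaps
    exact Complex.norm_deriv_le_one_of_mapsTo_ball hωd (by rw [hω0]; exact hm.mono_right ball_subset_closedBall) one_pos
  have hc2 : ‖deriv hh 0‖ ≤ 1 - ‖deriv ω 0‖ ^ 2 := by
    have := schwarz_pick_zero hhd hhb
    rwa [hh0] at this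
  -- derivative identities for g = z * q
  have hd1 : ∀ z ∈ ball (0:ℂ) 1, deriv g z = q z + z * deriv q z := by
    intro z hz
    rw [deriv_congr_ball g (fun w => w * q w) (fun w _ => (hgq w).symm) hz]
    rw [deriv_fun_mul differentiableAt_fun_id (hqd.differentiableAt (hBo.mem_nhds hz))]
    simp
  have hd2 : ∀ z ∈ ball (0:ℂ) 1, deriv (deriv g) z = 2 * deriv q z + z * deriv (deriv q) z := by
    intro z hz
    rw [deriv_congr_ball (deriv g) (fun w => q w + w * deriv q w) hd1 hz]
    rw [deriv_fun_add (hqd.differentiableAt (hBo.mem_nhds hz))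
      (differentiableAt_fun_id.fun_mul ((hqA.deriv z hz).differentiableAt))]
    rw [deriv_fun_mul differentiableAt_fun_id ((hqA.deriv z hz).differentiableAt)]
    simp; ring
  have hd3 : deriv (deriv (deriv g)) 0 = 3 * deriv (deriv q) 0 := by
    rw [deriv_congr_ball (deriv (deriv g)) (fun w => 2 * deriv q w + w * deriv (deriv q) w) hd2 hB0]
    rw [deriv_fun_add ((hqA.deriv 0 hB0).differentiableAt.const_mul 2)
      (differentiableAt_fun_id.fun_mul ((hqA.deriv.deriv 0 hB0).differentiableAt))]
    rw [deriv_const_mul 2 ((hqA.deriv 0 hB0).differentiableAt)]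
    rw [deriv_fun_mul differentiableAt_fun_id ((hqA.deriv.deriv 0 hB0).differentiableAt)]
    simp; ring
  -- derivative identities for deriv g = p * q
  have hpq : ∀ z ∈ ball (0:ℂ) 1, deriv g z = p z * q z := by
    intro z hz
    rw [hpdef]
    field_simp [hqne z hz]
  have he2 : ∀ z ∈ ball (0:ℂ) 1, deriv (deriv g) z = deriv p z * q z + p z * deriv q z := by
    intro z hz
    rw [deriv_congr_ball (deriv g) (fun w => p w * q w) hpq hz]
    rw [deriv_fun_mul (hpd.differentiableAt (hBo.mem_nhds hz)) (hqd.differentiableAt (hBo.mem_nhds hz))]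
  have he3 : deriv (deriv (deriv g)) 0
      = deriv (deriv p) 0 * q 0 + 2 * deriv p 0 * deriv q 0 + p 0 * deriv (deriv q) 0 := by
    rw [deriv_congr_ball (deriv (deriv g)) (fun w => deriv p w * q w + p w * deriv q w) he2 hB0]
    rw [deriv_fun_add (((hpA.deriv 0 hB0).differentiableAt).fun_mul (hqd.differentiableAt hBn))
      ((hpd.differentiableAt hBn).fun_mul ((hqA.deriv 0 hB0).differentiableAt))]
    rw [deriv_fun_mul ((hpA.deriv 0 hB0).differentiableAt) (hqd.differentiableAt hBn)]
    rw [deriv_fun_mul (hpd.differentiableAt hBn) ((hqA.deriv 0 hB0).differentiableAt)]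
    ring
  -- chain rule for p = Φ ∘ ω
  have hf1 : ∀ z ∈ ball (0:ℂ) 1, deriv p z = deriv Φ (ω z) * deriv ω z := by
    intro z hz
    rw [deriv_congr_ball p (fun w => Φ (ω w)) (fun w hw => (hωΦ w hw).symm) hz]
    have hcomp : HasDerivAt (fun w => Φ (ω w)) (deriv Φ (ω z) * deriv ω z) z :=
      ((hΦA _ (hωB z hz)).differentiableAt.hasDerivAt).comp z
        ((hωd.differentiableAt (hBo.mem_nhds hz)).hasDerivAt)
    exact hcomp.deriv
  have hf2 : deriv (deriv p) 0
      = deriv (deriv Φ) 0 * (deriv ω 0) ^ 2 + deriv Φ 0 * deriv (deriv ω) 0 := by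
    rw [deriv_congr_ball (deriv p) (fun w => deriv Φ (ω w) * deriv ω w) hf1 hB0]
    have hA1 : HasDerivAt (fun w => deriv Φ (ω w)) (deriv (deriv Φ) (ω 0) * deriv ω 0) 0 :=
      ((hΦA.deriv _ (hωB 0 hB0)).differentiableAt.hasDerivAt).comp 0
        ((hωd.differentiableAt hBn).hasDerivAt)
    have hA2 : HasDerivAt (deriv ω) (deriv (deriv ω) 0) 0 :=
      (hωA.deriv 0 hB0).differentiableAt.hasDerivAt
    have := (hA1.fun_mul hA2).deriv
    rw [this, hω0]
    ring
  -- ω = z * hh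
  have hg1 : ∀ z ∈ ball (0:ℂ) 1, deriv ω z = hh z + z * deriv hh z := by
    intro z hz
    rw [deriv_congr_ball ω (fun w => w * hh w) (fun w _ => (hωh w).symm) hz]
    rw [deriv_fun_mul differentiableAt_fun_id (hhd.differentiableAt (hBo.mem_nhds hz))]
    simp
  have hhA : AnalyticOnNhd ℂ hh (ball (0:ℂ) 1) := hhd.analyticOnNhd hBo
  have hg2 : deriv (deriv ω) 0 = 2 * deriv hh 0 := by
    rw [deriv_congr_ball (deriv ω) (fun w => hh w + w * deriv hh w) hg1 hB0]
    rw [deriv_fun_add (hhd.differentiableAt hBn)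
      (differentiableAt_fun_id.fun_mul ((hhA.deriv 0 hB0).differentiableAt))]
    rw [deriv_fun_mul differentiableAt_fun_id ((hhA.deriv 0 hB0).differentiableAt)]
    simp; ring
  -- algebra of coefficients
  have hA0 : deriv Φ 0 ≠ 0 := hΦder 0 hB0
  have hQ1 : deriv q 0 = deriv p 0 := by
    have e1 := hd2 0 hB0
    have e2 := he2 0 hB0
    rw [hq0, hp0] at e2
    linear_combination e2 - e1
  have hP1 : deriv p 0 = deriv Φ 0 * deriv ω 0 := by
    have := hf1 0 hB0
    rwa [hω0] at this
  have hP2 : deriv (deriv p) 0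
      = deriv (deriv Φ) 0 * (deriv ω 0) ^ 2 + deriv Φ 0 * (2 * deriv hh 0) := by
    rw [hf2, hg2]
  have hQ2 : 2 * deriv (deriv q) 0 = deriv (deriv p) 0 + 2 * (deriv p 0) ^ 2 := by
    have e1 := hd3
    have e2 := he3
    rw [hq0, hp0, hQ1] at e2
    linear_combination e2 - e1
  have hconv2 : iteratedDeriv 2 g 0 = deriv (deriv g) 0 := by
    simp [iteratedDeriv_succ, iteratedDeriv_zero]
  have hconv3 : iteratedDeriv 3 g 0 = deriv (deriv (deriv g)) 0 := by
    simp [iteratedDeriv_succ, iteratedDeriv_zero]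
  have hconvΦ : iteratedDeriv 2 Φ 0 = deriv (deriv Φ) 0 := by
    simp [iteratedDeriv_succ, iteratedDeriv_zero]
  have hD2 : iteratedDeriv 2 g 0 = 2 * (deriv Φ 0 * deriv ω 0) := by
    have e1 := hd2 0 hB0
    rw [hconv2, e1, hQ1, hP1]
    ring
  have hD3 : iteratedDeriv 3 g 0 = 3 * (deriv (deriv Φ) 0 * (deriv ω 0) ^ 2
      + deriv Φ 0 * (2 * deriv hh 0) + 2 * (deriv Φ 0 * deriv ω 0) ^ 2) / 2 := by
    rw [hconv3, hd3]
    linear_combination (3/2 : ℂ) * hQ2 + (3/2 : ℂ) * hP2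
      + 3 * (deriv p 0 + deriv Φ 0 * deriv ω 0) * hP1
  have hmain : iteratedDeriv 3 g 0 / 6 - lam * (iteratedDeriv 2 g 0 / 2) ^ 2
      = deriv Φ 0 / 2 * (deriv hh 0
        + (deriv (deriv Φ) 0 / (2 * deriv Φ 0) + (1 - 2 * lam) * deriv Φ 0)
          * (deriv ω 0) ^ 2) := by
    rw [hD3, hD2]
    field_simp
    ring
  rw [hmain, hconvΦ, norm_mul]
  have habs2 : ‖deriv Φ 0 / 2‖ = ‖deriv Φ 0‖ / 2 := by
    rw [norm_div]
    norm_num [Complex.norm_two]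
  rw [habs2]
  exact mul_le_mul_of_nonneg_left (coeff_bound hc1 hc2) (by positivity)
end

section
/- Let Φ : 𝕌 → ℂ be holomorphic with Φ(0)=1 and Re Φ > 0 on 𝕌, and let r > 0. Define G : 𝕌 → ℂ by G(z) = z·exp(∫₀^{z/r'} (Φ(it) − 1)/t dt) where r' ≥ 1 and the integrand (Φ(it)−1)/t is holomorphic (removable singularity at 0). Then G is holomorphic on 𝕌, G(0)=0, G'(0)=1, and its Taylor coefficients satisfy G''(0)/2! = iΦ'(0)/r' and G'''(0)/3! = −(1/2)(Φ''(0)/2 + Φ'(0)²)/r'². -/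
open Complex Metric Set

/-- One-dimensional extremal function `G(z) = z · exp(∫₀^{z/r'} (Φ(it)−1)/t dt)`:
the inner integral is encoded by a primitive `F` of the holomorphic extension `ψ`
of `t ↦ (Φ(it)−1)/t`, with `F 0 = 0`. -/
theorem extremal_function_coefficients (Φ ψ F G : ℂ → ℂ) (r' : ℝ) (hr' : 1 ≤ r')
    (hΦ : DifferentiableOn ℂ Φ (ball (0:ℂ) 1))
    (hΦ0 : Φ 0 = 1)
    (hΦre : ∀ z ∈ ball (0:ℂ) 1, 0 < (Φ z).re)
    (hψ : DifferentiableOn ℂ ψ (ball (0:ℂ) 1))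
    (hψ0 : ψ 0 = Complex.I * deriv Φ 0)
    (hψt : ∀ t ∈ ball (0:ℂ) 1, t ≠ 0 → ψ t = (Φ (Complex.I * t) - 1) / t)
    (hF0 : F 0 = 0)
    (hF : ∀ w ∈ ball (0:ℂ) 1, HasDerivAt F (ψ w) w)
    (hG : ∀ z ∈ ball (0:ℂ) 1, G z = z * Complex.exp (F (z / (r' : ℂ)))) :
    DifferentiableOn ℂ G (ball (0:ℂ) 1) ∧
    G 0 = 0 ∧
    deriv G 0 = 1 ∧
    iteratedDeriv 2 G 0 / 2 = Complex.I * deriv Φ 0 / (r' : ℂ) ∧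
    iteratedDeriv 3 G 0 / 6 =
      -(1/2) * (iteratedDeriv 2 Φ 0 / 2 + (deriv Φ 0) ^ 2) / (r' : ℂ) ^ 2 := by
  have h0 : (0:ℂ) ∈ ball (0:ℂ) 1 := by simp
  have hr0 : (0:ℝ) < r' := lt_of_lt_of_le one_pos hr'
  have hc : (r' : ℂ) ≠ 0 := by exact_mod_cast hr0.ne'
  have hnc : ‖(r' : ℂ)‖ = r' := by
    rw [Complex.norm_real, Real.norm_eq_abs, abs_of_pos hr0]
  have hmem : ∀ z ∈ ball (0:ℂ) 1, z / (r':ℂ) ∈ ball (0:ℂ) 1 := by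
    intro z hz
    simp only [mem_ball, dist_zero_right] at hz ⊢
    rw [norm_div, hnc]
    calc ‖z‖ / r' ≤ ‖z‖ := div_le_self (norm_nonneg z) hr'
      _ < 1 := hz
  have hmemI : ∀ t ∈ ball (0:ℂ) 1, Complex.I * t ∈ ball (0:ℂ) 1 := by
    intro t ht
    simp only [mem_ball, dist_zero_right] at ht ⊢
    simpa [norm_mul] using ht
  -- analyticity and pointwise derivatives
  have hψa : AnalyticOnNhd ℂ ψ (ball (0:ℂ) 1) := hψ.analyticOnNhd isOpen_ball
  have hΦa : AnalyticOnNhd ℂ Φ (ball (0:ℂ) 1) := hΦ.analyticOnNhd isOpen_ball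
  have hψd : ∀ w ∈ ball (0:ℂ) 1, HasDerivAt ψ (deriv ψ w) w :=
    fun w hw => ((hψa w hw).differentiableAt).hasDerivAt
  have hΦd : ∀ w ∈ ball (0:ℂ) 1, HasDerivAt Φ (deriv Φ w) w :=
    fun w hw => ((hΦa w hw).differentiableAt).hasDerivAt
  have hdψd : ∀ w ∈ ball (0:ℂ) 1, HasDerivAt (deriv ψ) (deriv (deriv ψ) w) w :=
    fun w hw => ((hψa.deriv w hw).differentiableAt).hasDerivAt
  have hdΦd : ∀ w ∈ ball (0:ℂ) 1, HasDerivAt (deriv Φ) (deriv (deriv Φ) w) w :=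
    fun w hw => ((hΦa.deriv w hw).differentiableAt).hasDerivAt
  -- key identity t ψ t = Φ(it) - 1 on the ball
  have hkey : ∀ t ∈ ball (0:ℂ) 1, t * ψ t = Φ (Complex.I * t) - 1 := by
    intro t ht
    by_cases h : t = 0
    · subst h; simp [hΦ0]
    · rw [hψt t ht h]; field_simp
  -- first derivative of the key identity
  have stepA : ∀ t ∈ ball (0:ℂ) 1, ψ t + t * deriv ψ t = Complex.I * deriv Φ (Complex.I * t) := by
    intro t ht
    have h1 : HasDerivAt (fun t => t * ψ t) (1 * ψ t + t * deriv ψ t) t :=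
      (hasDerivAt_id t).mul (hψd t ht)
    have hinner : HasDerivAt (fun t : ℂ => Complex.I * t) Complex.I t := by
      simpa using (hasDerivAt_id t).const_mul Complex.I
    have h2 : HasDerivAt (fun t => Φ (Complex.I * t) - 1) (deriv Φ (Complex.I * t) * Complex.I) t :=
      ((hΦd _ (hmemI t ht)).comp t hinner).sub_const 1
    have hev : (fun t => t * ψ t) =ᶠ[nhds t] (fun t => Φ (Complex.I * t) - 1) :=
      Filter.eventuallyEq_of_mem (isOpen_ball.mem_nhds ht) hkey
    have heq := (h2.congr_of_eventuallyEq hev).unique h1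
    linear_combination -heq
  -- second derivative at 0 : deriv ψ 0 = - Φ''(0)/2
  have hd2 : deriv ψ 0 = -(deriv (deriv Φ) 0) / 2 := by
    have h1 : HasDerivAt (fun t => ψ t + t * deriv ψ t)
        (deriv ψ 0 + (1 * deriv ψ 0 + 0 * deriv (deriv ψ) 0)) 0 :=
      (hψd 0 h0).add ((hasDerivAt_id 0).mul (hdψd 0 h0))
    have hinner : HasDerivAt (fun t : ℂ => Complex.I * t) Complex.I 0 := by
      simpa using (hasDerivAt_id (0:ℂ)).const_mul Complex.I
    have hg : HasDerivAt (deriv Φ) (deriv (deriv Φ) 0) (Complex.I * 0) := by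
      simpa using hdΦd 0 h0
    have h2 : HasDerivAt (fun t => Complex.I * deriv Φ (Complex.I * t))
        (Complex.I * (deriv (deriv Φ) 0 * Complex.I)) 0 := (hg.comp 0 hinner).const_mul Complex.I
    have hev : (fun t => ψ t + t * deriv ψ t) =ᶠ[nhds 0]
        (fun t => Complex.I * deriv Φ (Complex.I * t)) :=
      Filter.eventuallyEq_of_mem (isOpen_ball.mem_nhds h0) stepA
    have heq := (h2.congr_of_eventuallyEq hev).unique h1
    have hI : (Complex.I : ℂ) * Complex.I = -1 := Complex.I_mul_I
    linear_combination -heq / 2 + (deriv (deriv Φ) 0) / 2 * hI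
  -- derivative of E z = exp (F (z / r'))
  have hdiv : ∀ z : ℂ, HasDerivAt (fun z : ℂ => z / (r':ℂ)) (1/(r':ℂ)) z := by
    intro z
    simpa using (hasDerivAt_id z).div_const (r':ℂ)
  have hE : ∀ z ∈ ball (0:ℂ) 1, HasDerivAt (fun z => Complex.exp (F (z / (r':ℂ))))
      (ψ (z/(r':ℂ)) / (r':ℂ) * Complex.exp (F (z/(r':ℂ)))) z := by
    intro z hz
    have := ((hF _ (hmem z hz)).comp z (hdiv z)).cexp
    simp only [Function.comp] at this
    exact this.congr_deriv (by ring)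
  -- first derivative of G on the ball
  have hGd : ∀ z ∈ ball (0:ℂ) 1, HasDerivAt G
      ((1 + z * (ψ (z/(r':ℂ)) / (r':ℂ))) * Complex.exp (F (z/(r':ℂ)))) z := by
    intro z hz
    have h1 := (hasDerivAt_id z).mul (hE z hz)
    have hev : G =ᶠ[nhds z] fun z => z * Complex.exp (F (z/(r':ℂ))) :=
      Filter.eventuallyEq_of_mem (isOpen_ball.mem_nhds hz) hG
    have h2 := h1.congr_of_eventuallyEq hev
    simp only [id] at h2
    exact h2.congr_deriv (by ring)
  have hdG : ∀ z ∈ ball (0:ℂ) 1, deriv G z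
      = (1 + z * (ψ (z/(r':ℂ)) / (r':ℂ))) * Complex.exp (F (z/(r':ℂ))) :=
    fun z hz => (hGd z hz).deriv
  -- derivative of z ↦ ψ (z/r')
  have hA : ∀ z ∈ ball (0:ℂ) 1, HasDerivAt (fun z => ψ (z/(r':ℂ)))
      (deriv ψ (z/(r':ℂ)) * (1/(r':ℂ))) z :=
    fun z hz => (hψd _ (hmem z hz)).comp z (hdiv z)
  have hB : ∀ z ∈ ball (0:ℂ) 1, HasDerivAt (fun z => deriv ψ (z/(r':ℂ)))
      (deriv (deriv ψ) (z/(r':ℂ)) * (1/(r':ℂ))) z :=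
    fun z hz => by have := (hdψd _ (hmem z hz)).comp z (hdiv z); exact this
  -- second derivative of G
  have hG1d : ∀ z ∈ ball (0:ℂ) 1, HasDerivAt
      (fun z => (1 + z * (ψ (z/(r':ℂ)) / (r':ℂ))) * Complex.exp (F (z/(r':ℂ))))
      ((ψ (z/(r':ℂ))/(r':ℂ) + z * (deriv ψ (z/(r':ℂ)) / (r':ℂ)^2)) * Complex.exp (F (z/(r':ℂ)))
        + (1 + z * (ψ (z/(r':ℂ)) / (r':ℂ)))
          * (ψ (z/(r':ℂ))/(r':ℂ) * Complex.exp (F (z/(r':ℂ))))) z := by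
    intro z hz
    have hP : HasDerivAt (fun z => 1 + z * (ψ (z/(r':ℂ)) / (r':ℂ)))
        (0 + (1 * (ψ (z/(r':ℂ)) / (r':ℂ)) + z * (deriv ψ (z/(r':ℂ)) * (1/(r':ℂ)) / (r':ℂ)))) z :=
      (hasDerivAt_const z (1:ℂ)).add ((hasDerivAt_id z).mul ((hA z hz).div_const (r':ℂ)))
    have h2 := hP.mul (hE z hz)
    refine h2.congr_deriv ?_
    field_simp
    ring
  have hd2G : ∀ z ∈ ball (0:ℂ) 1, deriv (deriv G) z
      = (ψ (z/(r':ℂ))/(r':ℂ) + z * (deriv ψ (z/(r':ℂ)) / (r':ℂ)^2)) * Complex.exp (F (z/(r':ℂ)))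
        + (1 + z * (ψ (z/(r':ℂ)) / (r':ℂ)))
          * (ψ (z/(r':ℂ))/(r':ℂ) * Complex.exp (F (z/(r':ℂ)))) := by
    intro z hz
    have hev : deriv G =ᶠ[nhds z]
        (fun z => (1 + z * (ψ (z/(r':ℂ)) / (r':ℂ))) * Complex.exp (F (z/(r':ℂ)))) :=
      Filter.eventuallyEq_of_mem (isOpen_ball.mem_nhds hz) hdG
    rw [hev.deriv_eq]
    exact (hG1d z hz).deriv
  -- third derivative of G at 0 : differentiate the second-derivative formula
  have hG2d : HasDerivAt
      (fun z => (ψ (z/(r':ℂ))/(r':ℂ) + z * (deriv ψ (z/(r':ℂ)) / (r':ℂ)^2))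
          * Complex.exp (F (z/(r':ℂ)))
        + (1 + z * (ψ (z/(r':ℂ)) / (r':ℂ)))
          * (ψ (z/(r':ℂ))/(r':ℂ) * Complex.exp (F (z/(r':ℂ)))))
      (3 * (deriv ψ (0/(r':ℂ)) / (r':ℂ)^2) * Complex.exp (F (0/(r':ℂ)))
        + 3 * (ψ (0/(r':ℂ))/(r':ℂ))^2 * Complex.exp (F (0/(r':ℂ)))
        + (3 * (ψ (0/(r':ℂ))/(r':ℂ))^2
            * (0/(r':ℂ)) * Complex.exp (F (0/(r':ℂ))))) 0 := by
    -- build it with combinators, then normalize the derivative value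
    have hT1 : HasDerivAt (fun z => ψ (z/(r':ℂ))/(r':ℂ) + z * (deriv ψ (z/(r':ℂ)) / (r':ℂ)^2))
        (deriv ψ (0/(r':ℂ)) * (1/(r':ℂ)) / (r':ℂ)
          + (1 * (deriv ψ (0/(r':ℂ)) / (r':ℂ)^2)
            + 0 * (deriv (deriv ψ) (0/(r':ℂ)) * (1/(r':ℂ)) / (r':ℂ)^2))) 0 :=
      ((hA 0 h0).div_const (r':ℂ)).add
        ((hasDerivAt_id 0).mul ((hB 0 h0).div_const ((r':ℂ)^2)))
    have hP : HasDerivAt (fun z => 1 + z * (ψ (z/(r':ℂ)) / (r':ℂ)))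
        (0 + (1 * (ψ (0/(r':ℂ)) / (r':ℂ)) + 0 * (deriv ψ (0/(r':ℂ)) * (1/(r':ℂ)) / (r':ℂ)))) 0 :=
      (hasDerivAt_const 0 (1:ℂ)).add ((hasDerivAt_id 0).mul ((hA 0 h0).div_const (r':ℂ)))
    have h2 := (hT1.mul (hE 0 h0)).add (hP.mul (((hA 0 h0).div_const (r':ℂ)).mul (hE 0 h0)))
    refine h2.congr_deriv ?_
    simp only [zero_div, zero_mul, mul_zero, add_zero, one_mul, zero_add, mul_one, Pi.mul_apply]
    ring
  constructor
  · exact fun z hz => ((hGd z hz).differentiableAt).differentiableWithinAt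
  refine ⟨by simpa using hG 0 h0, ?_, ?_, ?_⟩
  · have := (hGd 0 h0).deriv
    simpa [hF0] using this
  · have h2 : iteratedDeriv 2 G 0 = deriv (deriv G) 0 := by
      simp [iteratedDeriv_succ, iteratedDeriv_zero]
    rw [h2, hd2G 0 h0]
    simp only [zero_div, zero_mul, mul_zero, add_zero, one_mul, zero_add, hF0, Complex.exp_zero,
      mul_one, hψ0]
    ring
  · have h3 : iteratedDeriv 3 G 0 = deriv (deriv (deriv G)) 0 := by
      simp [iteratedDeriv_succ, iteratedDeriv_zero]
    have hev : deriv (deriv G) =ᶠ[nhds 0]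
        (fun z => (ψ (z/(r':ℂ))/(r':ℂ) + z * (deriv ψ (z/(r':ℂ)) / (r':ℂ)^2))
            * Complex.exp (F (z/(r':ℂ)))
          + (1 + z * (ψ (z/(r':ℂ)) / (r':ℂ)))
            * (ψ (z/(r':ℂ))/(r':ℂ) * Complex.exp (F (z/(r':ℂ))))) :=
      Filter.eventuallyEq_of_mem (isOpen_ball.mem_nhds h0) hd2G
    rw [h3, hev.deriv_eq, hG2d.deriv]
    have hΦ2 : iteratedDeriv 2 Φ 0 = deriv (deriv Φ) 0 := by
      simp [iteratedDeriv_succ, iteratedDeriv_zero]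
    simp only [zero_div, zero_mul, mul_zero, add_zero, hF0, Complex.exp_zero, mul_one, hψ0, hd2,
      hΦ2]
    have hI : (Complex.I : ℂ) * Complex.I = -1 := Complex.I_mul_I
    linear_combination (deriv Φ 0)^2 / (2 * (r':ℂ)^2) * hI
end
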